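/- arXiv:1504.01681 — 4 statements merged into one kernel-verified Lean document; each statement's English description precedes it below -/
import Mathlib

section
/- The number of partitions that are simultaneously s-cores and t-cores, for coprime positive integers s and t, is (1/(s+t)) * binomial(s+t, s). -/
/-- A partition: a weakly decreasing, eventually-zero sequence of naturals
(0-indexed: `f i` is the `(i+1)`-th part). -/
structure Partn where
  f : ℕ → ℕ
  antitone : Antitone f
  eventually_zero : ∃ N, ∀ i, N ≤ i → f i = 0

/-- The beta-set `B(λ) = {λ_i - i : i ≥ 1}`. -/
def betaSet (p : Partn) : Set ℤ := {b | ∃ i : ℕ, b = (p.f i : ℤ) - (i + 1)}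

/-- `conjCount p j` is the `(j+1)`-th part of the conjugate partition. -/
noncomputable def conjCount (p : Partn) (j : ℕ) : ℕ := Set.ncard {i : ℕ | j + 1 ≤ p.f i}

/-- Hook length of the cell in row `r+1`, column `c+1` (1-indexed formula
`1 + (λ_r - r) + (λ'_c - c)`). -/
noncomputable def hookLen (p : Partn) (r c : ℕ) : ℤ :=
  1 + ((p.f r : ℤ) - (r + 1)) + ((conjCount p c : ℤ) - (c + 1))

/-- `p` is an `s`-core: no hook length is divisible by `s`. -/
def IsCore (s : ℕ) (p : Partn) : Prop :=
  ∀ r c : ℕ, c < p.f r → ¬ ((s : ℤ) ∣ hookLen p r c)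

/-- `p` is self-conjugate. -/
def SelfConj (p : Partn) : Prop := ∀ j, p.f j = conjCount p j

/-- The `s`-set of an `s`-core: `S(λ) = (B(λ)+s) \ B(λ)`. -/
def sSet (s : ℕ) (p : Partn) : Set ℤ := {x | x - s ∈ betaSet p ∧ x ∉ betaSet p}

/-- An `s`-set: `s` integers, pairwise incongruent mod `s`, summing to `C(s,2)`. -/
def IsSSet (s : ℕ) (X : Set ℤ) : Prop :=
  X.ncard = s ∧ (∀ a ∈ X, ∀ b ∈ X, a ≠ b → ¬ ((s : ℤ) ∣ (a - b))) ∧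
    (∑ᶠ x ∈ X, x) = (s.choose 2 : ℤ)

/-- The affine symmetric group `W̃_s`, as a set of permutations of `ℤ`:
`w(m+s) = w(m)+s` and `w(0)+⋯+w(s-1) = C(s,2)`. -/
def AffSymSet (s : ℕ) : Set (Equiv.Perm ℤ) :=
  {w | (∀ m : ℤ, w (m + s) = w m + s) ∧
    (∑ i ∈ Finset.range s, w (i : ℤ)) = (s.choose 2 : ℤ)}

/-- The underlying function of the Coxeter generator `w_i` of `W̃_s`, where `a = i - 1`:
swaps `m` and `m+1` whenever `m ≡ i - 1 (mod s)`. -/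
def genFun (s : ℕ) (a : ℤ) : ℤ → ℤ := fun m =>
  if (s : ℤ) ∣ (m - a) then m + 1 else if (s : ℤ) ∣ (m - a - 1) then m - 1 else m

lemma genFun_involutive (s : ℕ) (hs : 2 ≤ s) (a : ℤ) :
    Function.Involutive (genFun s a) := by
  have h1 : ¬ ((s : ℤ) ∣ 1) := by
    intro h
    have := Int.le_of_dvd one_pos h
    omega
  intro m
  unfold genFun
  by_cases hA : (s : ℤ) ∣ (m - a)
  · rw [if_pos hA]
    have hB : ¬ (s : ℤ) ∣ (m + 1 - a) := by
      intro h
      have := dvd_sub h hA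
      rw [show m + 1 - a - (m - a) = 1 by ring] at this
      exact h1 this
    rw [if_neg hB, if_pos (by rw [show m + 1 - a - 1 = m - a by ring]; exact hA)]
    ring
  · rw [if_neg hA]
    by_cases hB : (s : ℤ) ∣ (m - a - 1)
    · rw [if_pos hB, if_pos (by rw [show m - 1 - a = m - a - 1 by ring]; exact hB)]
      ring
    · rw [if_neg hB, if_neg hA, if_neg hB]

/-- The Coxeter generator `w_i` of `W̃_s`, where `a = i - 1`. -/
def genPerm (s : ℕ) (hs : 2 ≤ s) (a : ℤ) : Equiv.Perm ℤ :=
  (genFun_involutive s hs a).toPerm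

/-- The constant `c = (s-1)(t-1)/2`. -/
def lc (s t : ℕ) : ℤ := (((s : ℤ) - 1) * ((t : ℤ) - 1)) / 2

/-- The image `ẘ_i` of the generator `w_i` under the level `t` action on `ℤ`:
`m ↦ m + t` if `m ≡ (i-1)t - c (mod s)`, `m ↦ m - t` if `m ≡ it - c (mod s)`,
`m ↦ m` otherwise. -/
def levelGenFun (s t : ℕ) (i : ℤ) : ℤ → ℤ := fun m =>
  if (s : ℤ) ∣ (m - ((i - 1) * t - lc s t)) then m + t
  else if (s : ℤ) ∣ (m - (i * t - lc s t)) then m - t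
  else m

/-- `Φ` is (the restriction to `W̃_s` of) the level `t` action of `W̃_s` on `ℤ`:
a multiplicative map on `W̃_s` sending each generator `w_i` to `ẘ_i`. -/
def IsLevelTAction (s t : ℕ) (hs : 2 ≤ s) (Φ : Equiv.Perm ℤ → Equiv.Perm ℤ) : Prop :=
  (∀ w v : Equiv.Perm ℤ, w ∈ AffSymSet s → v ∈ AffSymSet s → Φ (w * v) = Φ w * Φ v) ∧
  (∀ i m : ℤ, Φ (genPerm s hs (i - 1)) m = levelGenFun s t i m)

/-- Removing a rim hook of length `t`, in terms of beta-sets: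
`μ` is obtained from `λ` by removing a rim `t`-hook. -/
def RemoveHook (t : ℕ) (p q : Partn) : Prop :=
  ∃ b ∈ betaSet p, b - t ∉ betaSet p ∧ betaSet q = insert (b - t) (betaSet p \ {b})


/-- A finite lower set of naturals is an initial segment. -/
lemma lowerSet_mem_iff {S : Set ℕ} (hfin : S.Finite)
    (hlow : ∀ i j, i ≤ j → j ∈ S → i ∈ S) (i : ℕ) : i ∈ S ↔ i < S.ncard := by
  rw [Set.ncard_eq_toFinset_card S hfin]
  constructor
  · intro hi
    have hsub : Finset.Iic i ⊆ hfin.toFinset := by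
      intro j hj
      simp only [Finset.mem_Iic] at hj
      simp only [Set.Finite.mem_toFinset]
      exact hlow j i hj hi
    have := Finset.card_le_card hsub
    simpa [Nat.card_Iic] using this
  · intro hi
    by_contra hns
    have hsub : hfin.toFinset ⊆ Finset.range i := by
      intro j hj
      simp only [Set.Finite.mem_toFinset] at hj
      simp only [Finset.mem_range]
      by_contra hji
      exact hns (hlow i j (le_of_not_gt hji) hj)
    have := Finset.card_le_card hsub
    simp only [Finset.card_range] at this
    omega

lemma conj_lt_iff (p : Partn) (c i : ℕ) : i < conjCount p c ↔ c + 1 ≤ p.f i := by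
  have hfin : ({i : ℕ | c + 1 ≤ p.f i}).Finite := by
    obtain ⟨N, hN⟩ := p.eventually_zero
    apply Set.Finite.subset (Set.finite_Iio N)
    intro j hj
    simp only [Set.mem_setOf_eq] at hj
    simp only [Set.mem_Iio]
    by_contra h
    have := hN j (le_of_not_gt h)
    omega
  have := lowerSet_mem_iff hfin (fun i j hij hj => le_trans hj (p.antitone hij)) i
  rw [conjCount]
  exact ⟨fun h => this.2 h, fun h => this.1 h⟩

/-- Disjointness: `β`-values and `γ`-values never coincide. -/
lemma beta_ne_gamma (p : Partn) (i c : ℕ) :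
    (p.f i : ℤ) - (i + 1) ≠ (c : ℤ) - conjCount p c := by
  have h := conj_lt_iff p c i
  by_cases hc : c + 1 ≤ p.f i
  · have hi : i < conjCount p c := h.2 hc
    intro he; omega
  · have hi : ¬ i < conjCount p c := fun hh => hc (h.1 hh)
    intro he; omega

/-- Covering: every integer is a `β`-value or a `γ`-value. -/
lemma beta_or_gamma (p : Partn) (x : ℤ) :
    (∃ i : ℕ, x = (p.f i : ℤ) - (i + 1)) ∨ (∃ c : ℕ, x = (c : ℤ) - conjCount p c) := by
  classical
  by_cases h0 : x < -(conjCount p 0 : ℤ)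
  · left
    set i := (-x - 1).toNat with hi
    have hx1 : (i : ℤ) = -x - 1 := by
      rw [hi, Int.toNat_of_nonneg]; omega
    have hge : ¬ i < conjCount p 0 := by
      have := conj_lt_iff p 0 i
      omega
    have hf0 : p.f i = 0 := by
      have := conj_lt_iff p 0 i
      omega
    exact ⟨i, by rw [hf0]; push_cast; omega⟩
  · push_neg at h0
    -- find greatest c with γ c ≤ x
    have hmono : ∀ c : ℕ, conjCount p c ≤ conjCount p 0 := by
      intro c
      by_contra h
      push_neg at h
      have h1 : conjCount p 0 < conjCount p c := h
      have h2 := (conj_lt_iff p c (conjCount p 0)).1 h1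
      have h3 := (conj_lt_iff p 0 (conjCount p 0)).2 (by omega)
      omega
    set P : ℕ → Prop := fun c => (c : ℤ) - conjCount p c ≤ x with hP
    have hPdec : DecidablePred P := fun c => by rw [hP]; infer_instance
    have hP0 : P 0 := by simp only [hP]; push_cast; omega
    set K := (x + (conjCount p 0 : ℤ) + 1).toNat with hK
    have hKx : (K : ℤ) = x + conjCount p 0 + 1 := by
      rw [hK, Int.toNat_of_nonneg]; omega
    have hPK : ¬ P K := by
      simp only [hP]
      have := hmono K
      omega
    set c₀ := Nat.findGreatest P K with hc₀
    have hPc₀ : P c₀ := Nat.findGreatest_spec (Nat.zero_le K) hP0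
    have hc₀K : c₀ ≠ K := fun h => hPK (h ▸ hPc₀)
    have hc₀le : c₀ ≤ K := Nat.findGreatest_le K
    have hnext : ¬ P (c₀ + 1) :=
      Nat.findGreatest_is_greatest (n := K) (by omega) (by omega)
    simp only [hP] at hPc₀ hnext
    push_neg at hnext
    by_cases heq : (c₀ : ℤ) - conjCount p c₀ = x
    · exact Or.inr ⟨c₀, heq.symm⟩
    · left
      -- γ c₀ < x < γ (c₀+1)
      set i := ((c₀ : ℤ) - x).toNat with hi
      have hxle : x ≤ (c₀ : ℤ) - conjCount p (c₀ + 1) := by push_cast at hnext ⊢; omega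
      have hiv : (i : ℤ) = (c₀ : ℤ) - x := by
        rw [hi, Int.toNat_of_nonneg]
        have := Int.ofNat_nonneg (conjCount p (c₀ + 1))
        omega
      have hilt : i < conjCount p c₀ := by omega
      have hige : ¬ i < conjCount p (c₀ + 1) := by omega
      have hf1 := (conj_lt_iff p c₀ i).1 hilt
      have hf2 : ¬ (c₀ + 1 + 1 ≤ p.f i) := fun h => hige ((conj_lt_iff p (c₀+1) i).2 h)
      have hfv : p.f i = c₀ + 1 := by omega
      exact ⟨i, by rw [hfv]; push_cast; omega⟩

lemma closure_iterate {B : Set ℤ} {s : ℕ} (hcl : ∀ b ∈ B, b - s ∈ B) {b : ℤ} (hb : b ∈ B) :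
    ∀ k : ℕ, b - k * s ∈ B := by
  intro k
  induction k with
  | zero => simpa using hb
  | succ n ih =>
      have := hcl _ ih
      convert this using 1
      push_cast
      ring

lemma isCore_iff (p : Partn) (s : ℕ) (hs : 0 < s) :
    IsCore s p ↔ ∀ b ∈ betaSet p, b - s ∈ betaSet p := by
  constructor
  · intro hcore b hb
    obtain ⟨r, rfl⟩ := hb
    by_contra hns
    obtain (⟨i, hi⟩ | ⟨c, hc⟩) := beta_or_gamma p ((p.f r : ℤ) - (r + 1) - s)
    · exact hns ⟨i, hi⟩
    · have hcell : c < p.f r := by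
        by_contra hge
        push_neg at hge
        have h1 : conjCount p c ≤ r := by
          by_contra hh
          push_neg at hh
          have := (conj_lt_iff p c r).1 hh
          omega
        omega
      refine hcore r c hcell ⟨1, ?_⟩
      rw [hookLen]
      push_cast at hc ⊢
      omega
  · intro hcl r c hlt hdvd
    have hγr : r < conjCount p c := (conj_lt_iff p c r).2 (by omega)
    have hpos : 0 < hookLen p r c := by
      rw [hookLen]
      push_cast
      omega
    obtain ⟨k, hk⟩ := hdvd
    have hks : 0 < (s : ℤ) * k := hk ▸ hpos
    have hk0 : 0 < k := by
      rcases mul_pos_iff.mp hks with ⟨_, h⟩ | ⟨h, _⟩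
      · exact h
      · exfalso; omega
    have hmem : ((p.f r : ℤ) - (r + 1)) - (k.toNat : ℤ) * s ∈ betaSet p :=
      closure_iterate hcl ⟨r, rfl⟩ k.toNat
    obtain ⟨i, hi⟩ := hmem
    apply beta_ne_gamma p i c
    have hkn : (k.toNat : ℤ) = k := Int.toNat_of_nonneg (le_of_lt hk0)
    rw [hookLen] at hk
    push_cast at hi hk ⊢
    rw [hkn] at hi
    nlinarith [hi, hk]


section Abacus
variable (s t : ℕ)

def rho (k : ZMod s) : ℤ := ((-(ZMod.val k : ℤ)) * t) % s

def qv (k : ZMod s) : ℤ := (rho s t k - t - rho s t (k + 1)) / s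

def AbSet (m : ZMod s → ℤ) : Set ℤ := {x | ∃ k, (s : ℤ) ∣ (x - rho s t k) ∧ x ≤ m k}

variable {s t}

lemma rho_nonneg (hs : 0 < s) (k : ZMod s) : 0 ≤ rho s t k :=
  Int.emod_nonneg _ (by exact_mod_cast hs.ne')

lemma rho_lt (hs : 0 < s) (k : ZMod s) : rho s t k < s :=
  Int.emod_lt_of_pos _ (by exact_mod_cast hs)

lemma rho_res (hs : 0 < s) (k : ZMod s) : ((rho s t k : ℤ) : ZMod s) = -k * t := by
  haveI : NeZero s := ⟨hs.ne'⟩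
  have h : (s : ℤ) ∣ (rho s t k - (-(ZMod.val k : ℤ)) * t) := by
    rw [rho, Int.emod_def]
    exact ⟨-(((-(ZMod.val k : ℤ)) * t) / s), by ring⟩
  have h2 : ((rho s t k - (-(ZMod.val k : ℤ)) * t : ℤ) : ZMod s) = 0 :=
    (ZMod.intCast_zmod_eq_zero_iff_dvd _ s).2 h
  rw [Int.cast_sub, sub_eq_zero] at h2
  rw [h2]
  push_cast
  rw [ZMod.natCast_val, ZMod.cast_id]

lemma rho_inj (hs : 0 < s) (hst : Nat.Coprime s t) :
    Function.Injective (fun k : ZMod s => rho s t k) := by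
  haveI : NeZero s := ⟨hs.ne'⟩
  intro k k' h
  simp only at h
  have h1 : -k * (t : ZMod s) = -k' * t := by
    rw [← rho_res hs k, ← rho_res hs k', h]
  have hu : IsUnit (t : ZMod s) := (ZMod.isUnit_iff_coprime t s).2 hst.symm
  have h2 : (t : ZMod s) * (-k) = (t : ZMod s) * (-k') := by
    rw [mul_comm, h1, mul_comm]
  exact neg_injective (hu.mul_left_cancel h2)

lemma exists_class (hs : 0 < s) (hst : Nat.Coprime s t) (x : ℤ) :
    ∃ k : ZMod s, (s : ℤ) ∣ (x - rho s t k) := by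
  haveI : NeZero s := ⟨hs.ne'⟩
  have hu : IsUnit (t : ZMod s) := (ZMod.isUnit_iff_coprime t s).2 hst.symm
  obtain ⟨u, hu⟩ := hu
  refine ⟨-(x : ZMod s) * ↑u⁻¹, ?_⟩
  rw [← ZMod.intCast_zmod_eq_zero_iff_dvd]
  rw [Int.cast_sub, rho_res hs, sub_eq_zero]
  rw [← hu, show -(-(x : ZMod s) * ↑u⁻¹) * ↑u = (x : ZMod s) * (↑u⁻¹ * ↑u) by ring,
    Units.inv_mul, mul_one]

lemma class_unique (hs : 0 < s) (hst : Nat.Coprime s t) {x : ℤ} {k k' : ZMod s}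
    (h : (s : ℤ) ∣ (x - rho s t k)) (h' : (s : ℤ) ∣ (x - rho s t k')) : k = k' := by
  apply rho_inj hs hst
  simp only
  have hd : (s : ℤ) ∣ (rho s t k' - rho s t k) := by
    have := dvd_sub h h'
    simpa using this
  have h1 := rho_nonneg (t := t) hs k
  have h2 := rho_lt (t := t) hs k
  have h3 := rho_nonneg (t := t) hs k'
  have h4 := rho_lt (t := t) hs k'
  obtain ⟨c, hc⟩ := hd
  have hc0 : c = 0 := by nlinarith [hc]
  rw [hc0] at hc
  omega

lemma qv_spec (hs : 0 < s) (k : ZMod s) :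
    (s : ℤ) * qv s t k = rho s t k - t - rho s t (k + 1) := by
  haveI : NeZero s := ⟨hs.ne'⟩
  have hd : (s : ℤ) ∣ (rho s t k - t - rho s t (k + 1)) := by
    rw [← ZMod.intCast_zmod_eq_zero_iff_dvd]
    push_cast
    rw [rho_res hs, rho_res hs]
    ring
  rw [qv, Int.mul_ediv_cancel' hd]

end Abacus

section Hermite
variable {s t : ℕ} [NeZero s]

lemma sum_res (hs : 0 < s) (g : ZMod s → ℤ) (h0 : ∀ k, 0 ≤ g k) (h1 : ∀ k, g k < s)
    (hinj : Function.Injective g) :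
    ∑ k : ZMod s, g k = ∑ j ∈ Finset.range s, (j : ℤ) := by
  have himg : (Finset.univ.image g) = (Finset.range s).image (fun j : ℕ => (j : ℤ)) := by
    apply Finset.eq_of_subset_of_card_le
    · intro x hx
      simp only [Finset.mem_image, Finset.mem_univ, true_and] at hx
      obtain ⟨k, rfl⟩ := hx
      simp only [Finset.mem_image, Finset.mem_range]
      refine ⟨(g k).toNat, ?_, Int.toNat_of_nonneg (h0 k)⟩
      have := h0 k; have := h1 k
      omega
    · rw [Finset.card_image_of_injective _ (fun a b h => by exact_mod_cast h),
        Finset.card_range,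
        Finset.card_image_of_injective _ hinj, Finset.card_univ, ZMod.card]
  calc ∑ k : ZMod s, g k = ∑ x ∈ Finset.univ.image g, x := by
        rw [Finset.sum_image (fun x _ y _ h => hinj h)]
      _ = ∑ x ∈ (Finset.range s).image (fun j : ℕ => (j : ℤ)), x := by rw [himg]
      _ = ∑ j ∈ Finset.range s, (j : ℤ) := by
        rw [Finset.sum_image (fun x _ y _ h => by exact_mod_cast h)]

lemma sum_rho_two (hs : 0 < s) (hst : Nat.Coprime s t) :
    2 * ∑ k : ZMod s, rho s t k = s * ((s : ℤ) - 1) := by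
  rw [sum_res hs _ (rho_nonneg hs) (rho_lt hs) (rho_inj hs hst)]
  have h := Finset.sum_range_id_mul_two s
  have h' := congrArg (Nat.cast : ℕ → ℤ) h
  push_cast [Nat.cast_sub hs] at h'
  linarith [h']

lemma emod_inj (hs : 0 < s) (hst : Nat.Coprime s t) (x : ℤ) :
    Function.Injective (fun k : ZMod s => (x - rho s t k) % s) := by
  intro k k' h
  simp only at h
  apply rho_inj hs hst
  simp only
  have d1 : (s:ℤ) ∣ ((x - rho s t k) - (x - rho s t k) % s) := Int.dvd_self_sub_of_emod_eq rfl
  have d2 : (s:ℤ) ∣ ((x - rho s t k') - (x - rho s t k') % s) := Int.dvd_self_sub_of_emod_eq rfl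
  have d3 : (s:ℤ) ∣ (rho s t k' - rho s t k) := by
    have := dvd_sub d1 d2
    rw [h] at this
    convert this using 1
    · rfl
    ring
  have h1 := rho_nonneg (t := t) hs k
  have h2 := rho_lt (t := t) hs k
  have h3 := rho_nonneg (t := t) hs k'
  have h4 := rho_lt (t := t) hs k'
  obtain ⟨c, hc⟩ := d3
  have hc0 : c = 0 := by nlinarith [hc]
  rw [hc0] at hc
  omega

lemma hermite (hs : 0 < s) (hst : Nat.Coprime s t) (x : ℤ) :
    ∑ k : ZMod s, (x - rho s t k) / s = x - s + 1 := by
  have hs0 : (s : ℤ) ≠ 0 := by exact_mod_cast hs.ne'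
  apply mul_left_cancel₀ hs0
  have hmod : ∑ k : ZMod s, (x - rho s t k) % s = ∑ k : ZMod s, rho s t k := by
    rw [sum_res hs _ (fun k => Int.emod_nonneg _ hs0)
        (fun k => Int.emod_lt_of_pos _ (by exact_mod_cast hs)) (emod_inj hs hst x),
      sum_res hs _ (rho_nonneg hs) (rho_lt hs) (rho_inj hs hst)]
  have hdm : ∀ k : ZMod s, (s:ℤ) * ((x - rho s t k) / s)
      = (x - rho s t k) - (x - rho s t k) % s := by
    intro k
    have := Int.mul_ediv_add_emod (x - rho s t k) s
    omega
  have hconst : ∑ _k : ZMod s, x = (s : ℤ) * x := by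
    simp [Finset.sum_const, Finset.card_univ, ZMod.card, mul_comm]
  calc (s:ℤ) * ∑ k : ZMod s, (x - rho s t k) / s
      = ∑ k : ZMod s, (s:ℤ) * ((x - rho s t k) / s) := by rw [Finset.mul_sum]
    _ = ∑ k : ZMod s, ((x - rho s t k) - (x - rho s t k) % s) :=
        Finset.sum_congr rfl (fun k _ => hdm k)
    _ = (∑ k : ZMod s, (x - rho s t k)) - ∑ k : ZMod s, (x - rho s t k) % s :=
        Finset.sum_sub_distrib _ _
    _ = ((s:ℤ) * x - ∑ k : ZMod s, rho s t k) - ∑ k : ZMod s, rho s t k := by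
        rw [hmod, Finset.sum_sub_distrib, hconst]
    _ = (s:ℤ) * x - 2 * ∑ k : ZMod s, rho s t k := by ring
    _ = (s:ℤ) * (x - s + 1) := by
        have := sum_rho_two hs hst
        linarith

end Hermite

section Count
variable {s t : ℕ} [NeZero s]

lemma abset_count (hs : 0 < s) (hst : Nat.Coprime s t) (m : ZMod s → ℤ)
    (hm : ∀ k, (s:ℤ) ∣ (m k - rho s t k)) (x : ℤ) (hx : ∀ k, x ≤ m k) :
    ({y | y ∈ AbSet s t m ∧ x < y}.ncard : ℤ)
      = (∑ k : ZMod s, (m k - rho s t k) / s) - x + s - 1 := by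
  classical
  have hs' : (0:ℤ) < s := by exact_mod_cast hs
  set F : Finset ℤ := Finset.univ.biUnion (fun k : ZMod s =>
    (Finset.Ioc ((x - rho s t k)/s) ((m k - rho s t k)/s)).image
      (fun z => rho s t k + s * z)) with hF
  have hmem : ∀ y : ℤ, y ∈ F ↔ (y ∈ AbSet s t m ∧ x < y) := by
    intro y
    simp only [hF, Finset.mem_biUnion, Finset.mem_univ, true_and, Finset.mem_image,
      Finset.mem_Ioc]
    constructor
    · rintro ⟨k, z, ⟨hz1, hz2⟩, rfl⟩
      have hsz : (s:ℤ) * z ≤ m k - rho s t k := by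
        calc (s:ℤ) * z ≤ s * ((m k - rho s t k)/s) := by
              exact mul_le_mul_of_nonneg_left hz2 (le_of_lt hs')
          _ ≤ m k - rho s t k := by
              rw [Int.mul_ediv_cancel' (hm k)]
      refine ⟨⟨k, ⟨z, by ring⟩, by omega⟩, ?_⟩
      have h1 : (s:ℤ) * ((x - rho s t k)/s) + (x - rho s t k) % s = x - rho s t k :=
        Int.mul_ediv_add_emod _ _
      have h2 : (x - rho s t k) % s < s := Int.emod_lt_of_pos _ hs'
      have h3 : (s:ℤ) * ((x - rho s t k)/s + 1) ≤ s * z :=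
        mul_le_mul_of_nonneg_left (by omega) (le_of_lt hs')
      nlinarith [h3]
    · rintro ⟨⟨k, hdvd, hle⟩, hxy⟩
      refine ⟨k, (y - rho s t k)/s, ⟨?_, Int.ediv_le_ediv hs' (by omega)⟩, ?_⟩
      · have h1 : (s:ℤ) * ((x - rho s t k)/s) + (x - rho s t k) % s = x - rho s t k :=
          Int.mul_ediv_add_emod _ _
        have h2 : 0 ≤ (x - rho s t k) % s := Int.emod_nonneg _ (by omega)
        have h3 : (s:ℤ) * ((x - rho s t k)/s) < s * ((y - rho s t k)/s) := by
          rw [Int.mul_ediv_cancel' hdvd]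
          omega
        exact lt_of_mul_lt_mul_left h3 (le_of_lt hs')
      · rw [Int.mul_ediv_cancel' hdvd]
        ring
  have hseteq : {y | y ∈ AbSet s t m ∧ x < y} = (F : Set ℤ) := by
    ext y
    simp only [Set.mem_setOf_eq, Finset.coe_sort_coe, Finset.mem_coe]
    exact (hmem y).symm
  rw [hseteq, Set.ncard_coe_finset]
  have hdisj : ∀ k ∈ Finset.univ, ∀ k' ∈ Finset.univ, k ≠ k' →
      Disjoint ((Finset.Ioc ((x - rho s t k)/s) ((m k - rho s t k)/s)).image
        (fun z => rho s t k + s * z))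
        ((Finset.Ioc ((x - rho s t k')/s) ((m k' - rho s t k')/s)).image
        (fun z => rho s t k' + s * z)) := by
    intro k _ k' _ hkk'
    rw [Finset.disjoint_left]
    rintro y hy hy'
    simp only [Finset.mem_image, Finset.mem_Ioc] at hy hy'
    obtain ⟨z, _, rfl⟩ := hy
    obtain ⟨z', _, hz'⟩ := hy'
    exact hkk' (class_unique hs hst (x := rho s t k + s * z) ⟨z, by ring⟩
      ⟨z', by rw [← hz']; ring⟩)
  rw [hF, Finset.card_biUnion hdisj]
  push_cast
  have hcard : ∀ k : ZMod s,
      (((Finset.Ioc ((x - rho s t k)/s) ((m k - rho s t k)/s)).image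
        (fun z => rho s t k + s * z)).card : ℤ)
      = (m k - rho s t k)/s - (x - rho s t k)/s := by
    intro k
    rw [Finset.card_image_of_injective _ (fun a b h => by
      have : (s:ℤ) * a = s * b := by omega
      exact mul_left_cancel₀ (by omega : (s:ℤ) ≠ 0) this)]
    rw [Int.card_Ioc]
    have hle : (x - rho s t k)/s ≤ (m k - rho s t k)/s :=
      Int.ediv_le_ediv hs' (by have := hx k; omega)
    omega
  rw [Finset.sum_congr rfl (fun k _ => hcard k), Finset.sum_sub_distrib]
  rw [hermite hs hst x]
  ring

end Count

section Enum

lemma strictAnti_gap {g : ℕ → ℤ} (hg : StrictAnti g) :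
    ∀ i j : ℕ, i ≤ j → g j + (j : ℤ) ≤ g i + i := by
  intro i j hij
  induction j, hij using Nat.le_induction with
  | base => exact le_refl _
  | succ n hn ih =>
      have := hg (by omega : n < n + 1)
      push_cast
      push_cast at ih
      omega

lemma range_count (g : ℕ → ℤ) (hg : StrictAnti g) (i : ℕ) :
    ({y | y ∈ Set.range g ∧ g i < y}.ncard : ℤ) = i := by
  classical
  have hseteq : {y | y ∈ Set.range g ∧ g i < y} = ↑((Finset.range i).image g) := by
    ext y
    simp only [Set.mem_setOf_eq, Finset.coe_image, Set.mem_image, Finset.mem_coe,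
      Finset.mem_range]
    constructor
    · rintro ⟨⟨j, rfl⟩, hgt⟩
      exact ⟨j, hg.lt_iff_gt.1 hgt, rfl⟩
    · rintro ⟨j, hj, rfl⟩
      exact ⟨⟨j, rfl⟩, hg.lt_iff_gt.2 hj⟩
  rw [hseteq, Set.ncard_coe_finset,
    Finset.card_image_of_injective _ hg.injective, Finset.card_range]

lemma enum_exists {B : Set ℤ} {s : ℕ} (hs : 0 < s) (hne : B.Nonempty)
    (hbdd : ∃ ub, ∀ b ∈ B, b ≤ ub) (hcl : ∀ b ∈ B, b - (s : ℤ) ∈ B) :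
    ∃ g : ℕ → ℤ, StrictAnti g ∧ Set.range g = B := by
  classical
  obtain ⟨ub, hub⟩ := hbdd
  obtain ⟨g0, hg0B, hg0max⟩ :=
    Int.exists_greatest_of_bdd (P := fun y => y ∈ B) ⟨ub, hub⟩ hne
  have hstep : ∀ z : ℤ, ∃ w : ℤ, z ∈ B → (w ∈ B ∧ w < z ∧ ∀ y ∈ B, y < z → y ≤ w) := by
    intro z
    by_cases hz : z ∈ B
    · obtain ⟨w, hw, hmax⟩ := Int.exists_greatest_of_bdd (P := fun y => y ∈ B ∧ y < z)
        ⟨z, fun y hy => le_of_lt hy.2⟩ ⟨z - s, hcl z hz, by omega⟩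
      exact ⟨w, fun _ => ⟨hw.1, hw.2, fun y hy hyz => hmax y ⟨hy, hyz⟩⟩⟩
    · exact ⟨0, fun h => absurd h hz⟩
  choose Fn hFn using hstep
  set g : ℕ → ℤ := fun n => Nat.rec g0 (fun _ z => Fn z) n with hgdef
  have hg0 : g 0 = g0 := rfl
  have hgs : ∀ n, g (n + 1) = Fn (g n) := fun n => rfl
  have hB : ∀ n, g n ∈ B := by
    intro n
    induction n with
    | zero => exact hg0B
    | succ n ih => rw [hgs]; exact (hFn (g n) ih).1
  have hlt : ∀ n, g (n + 1) < g n := fun n => by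
    rw [hgs]; exact (hFn (g n) (hB n)).2.1
  have hmaxb : ∀ n, ∀ y ∈ B, y < g n → y ≤ g (n + 1) := fun n y hy hlt' => by
    rw [hgs]; exact (hFn (g n) (hB n)).2.2 y hy hlt'
  have hga : StrictAnti g := strictAnti_nat_of_succ_lt hlt
  refine ⟨g, hga, ?_⟩
  apply Set.eq_of_subset_of_subset
  · rintro y ⟨n, rfl⟩; exact hB n
  · intro x hx
    by_contra hnr
    have hne' : ∀ n, g n ≠ x := by
      intro n h
      exact hnr ⟨n, h⟩
    have hle : ∀ n, x ≤ g n := by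
      intro n
      induction n with
      | zero => rw [hg0]; exact hg0max x hx
      | succ n ih =>
          have : x < g n := lt_of_le_of_ne ih (fun h => hne' n h.symm)
          exact hmaxb n x hx this
    have hgap := strictAnti_gap hga 0 ((g 0 - x + 1).toNat) (Nat.zero_le _)
    have := hle ((g 0 - x + 1).toNat)
    have hx0 : x ≤ g 0 := hle 0
    rw [Int.toNat_of_nonneg (by omega)] at hgap
    omega

end Enum

section Bridge

lemma strictAnti_range_unique {g h : ℕ → ℤ} (hg : StrictAnti g) (hh : StrictAnti h)
    (hr : Set.range g = Set.range h) : g = h := by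
  funext i
  induction i using Nat.strong_induction_on with
  | _ i ih =>
    have h1 : ∃ j, h j = g i := by
      have : g i ∈ Set.range h := hr ▸ ⟨i, rfl⟩
      exact this
    have h2 : ∃ j, g j = h i := by
      have : h i ∈ Set.range g := hr.symm ▸ ⟨i, rfl⟩
      exact this
    obtain ⟨j1, hj1⟩ := h1
    obtain ⟨j2, hj2⟩ := h2
    have hle1 : g i ≤ h i := by
      rcases lt_trichotomy j1 i with h' | h' | h'
      · exfalso
        have := ih j1 h'
        rw [← this] at hj1
        exact (hg.injective hj1 ▸ h').false
      · exact (h' ▸ hj1).ge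
      · rw [← hj1]
        exact hh.antitone (le_of_lt h')
    have hle2 : h i ≤ g i := by
      rcases lt_trichotomy j2 i with h' | h' | h'
      · exfalso
        have := ih j2 h'
        rw [this] at hj2
        exact (hh.injective hj2 ▸ h').false
      · exact (h' ▸ hj2).ge
      · rw [← hj2]
        exact hg.antitone (le_of_lt h')
    omega

/-- the beta enumeration. -/
def beta (p : Partn) (i : ℕ) : ℤ := (p.f i : ℤ) - (i + 1)

lemma beta_strictAnti (p : Partn) : StrictAnti (beta p) := by
  apply strictAnti_nat_of_succ_lt
  intro n
  have := p.antitone (by omega : n ≤ n + 1)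
  simp only [beta]
  push_cast
  omega

lemma betaSet_eq_range (p : Partn) : betaSet p = Set.range (beta p) := by
  ext b
  simp only [betaSet, Set.mem_setOf_eq, Set.mem_range, beta]
  exact ⟨fun ⟨i, hi⟩ => ⟨i, hi.symm⟩, fun ⟨i, hi⟩ => ⟨i, hi.symm⟩⟩

lemma partn_eq_of_betaSet_eq {p q : Partn} (h : betaSet p = betaSet q) : p = q := by
  rw [betaSet_eq_range, betaSet_eq_range] at h
  have := strictAnti_range_unique (beta_strictAnti p) (beta_strictAnti q) h
  have hf : p.f = q.f := by
    funext i
    have := congrFun this i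
    simp only [beta] at this
    omega
  cases p; cases q
  simp only at hf
  subst hf
  rfl

lemma abset_unique {s t : ℕ} (hs : 0 < s) (hst : Nat.Coprime s t) {m m' : ZMod s → ℤ}
    (hm : ∀ k, (s:ℤ) ∣ (m k - rho s t k)) (hm' : ∀ k, (s:ℤ) ∣ (m' k - rho s t k))
    (h : AbSet s t m = AbSet s t m') : m = m' := by
  have key : ∀ (m₁ m₂ : ZMod s → ℤ), (∀ k, (s:ℤ) ∣ (m₁ k - rho s t k)) →
      (∀ k, (s:ℤ) ∣ (m₂ k - rho s t k)) → AbSet s t m₁ = AbSet s t m₂ →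
      ∀ k, m₁ k ≤ m₂ k := by
    intro m₁ m₂ hm₁ hm₂ heq k
    have hmem : m₁ k ∈ AbSet s t m₂ := heq ▸ ⟨k, hm₁ k, le_refl _⟩
    obtain ⟨k', hd', hle'⟩ := hmem
    have : k' = k := class_unique hs hst hd' (hm₁ k)
    rwa [this] at hle'
  funext k
  exact le_antisymm (key m m' hm hm' h k) (key m' m hm' hm h.symm k)

end Bridge

section Fwd
variable {s t : ℕ} [NeZero s]

lemma core_to_abacus (hs : 0 < s) (ht : 0 < t) (hst : Nat.Coprime s t)
    (p : Partn) (hps : IsCore s p) (hpt : IsCore t p) :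
    ∃ m : ZMod s → ℤ, (∀ k, (s:ℤ) ∣ (m k - rho s t k)) ∧
      (∀ k, m k - t ≤ m (k + 1)) ∧
      (∑ k : ZMod s, (m k - rho s t k) / s) = -(s:ℤ) ∧
      betaSet p = AbSet s t m := by
  classical
  have hcls : ∀ b ∈ betaSet p, b - (s:ℤ) ∈ betaSet p := (isCore_iff p s hs).1 hps
  have hclt : ∀ b ∈ betaSet p, b - (t:ℤ) ∈ betaSet p := (isCore_iff p t ht).1 hpt
  have hb0 : beta p 0 ∈ betaSet p := by rw [betaSet_eq_range]; exact ⟨0, rfl⟩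
  have hbdd : ∀ b ∈ betaSet p, b ≤ beta p 0 := by
    rw [betaSet_eq_range]
    rintro b ⟨i, rfl⟩
    exact (beta_strictAnti p).antitone (Nat.zero_le i)
  have hclass : ∀ k : ZMod s, ∃ z, z ∈ betaSet p ∧ (s:ℤ) ∣ (z - rho s t k) := by
    intro k
    obtain ⟨u, hu⟩ := (ZMod.isUnit_iff_coprime t s).2 hst.symm
    set c : ZMod s := (((beta p 0 : ℤ) : ZMod s) + k * t) * ↑u⁻¹ with hc
    refine ⟨beta p 0 - (ZMod.val c : ℤ) * t, closure_iterate hclt hb0 (ZMod.val c), ?_⟩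
    rw [← ZMod.intCast_zmod_eq_zero_iff_dvd]
    push_cast
    rw [ZMod.natCast_val, ZMod.cast_id, rho_res hs, hc]
    rw [show ((beta p 0 : ℤ) : ZMod s) - (((beta p 0 : ℤ) : ZMod s) + k * ↑t) * ↑u⁻¹ * ↑t - -k * ↑t
        = ((beta p 0 : ℤ) : ZMod s) + k * ↑t - (((beta p 0 : ℤ) : ZMod s) + k * ↑t) * (↑u⁻¹ * ↑t) by ring]
    rw [← hu, Units.inv_mul, mul_one]
    ring
  have hex : ∀ k : ZMod s, ∃ mk, (mk ∈ betaSet p ∧ (s:ℤ) ∣ (mk - rho s t k)) ∧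
      ∀ z, (z ∈ betaSet p ∧ (s:ℤ) ∣ (z - rho s t k)) → z ≤ mk := by
    intro k
    obtain ⟨z, hz⟩ := hclass k
    obtain ⟨mk, h1, h2⟩ := Int.exists_greatest_of_bdd
      (P := fun z => z ∈ betaSet p ∧ (s:ℤ) ∣ (z - rho s t k))
      ⟨beta p 0, fun y hy => hbdd y hy.1⟩ ⟨z, hz⟩
    exact ⟨mk, h1, h2⟩
  choose m hm1 hm2 using hex
  have hmdvd : ∀ k, (s:ℤ) ∣ (m k - rho s t k) := fun k => (hm1 k).2
  have hBA : betaSet p = AbSet s t m := by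
    ext x
    constructor
    · intro hx
      obtain ⟨k, hk⟩ := exists_class hs hst x
      exact ⟨k, hk, hm2 k x ⟨hx, hk⟩⟩
    · rintro ⟨k, hdvd, hle⟩
      have hdd : (s:ℤ) ∣ (m k - x) := by
        have := dvd_sub (hm1 k).2 hdvd
        convert this using 1
        · rfl
        ring
      have hj : (((m k - x)/s).toNat : ℤ) = (m k - x)/s :=
        Int.toNat_of_nonneg (Int.ediv_nonneg (by omega) (by positivity))
      have hval : m k - (((m k - x)/s).toNat : ℤ) * s = x := by
        rw [hj, Int.ediv_mul_cancel hdd]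
        ring
      rw [← hval]
      exact closure_iterate hcls (hm1 k).1 _
  have hineq : ∀ k, m k - t ≤ m (k + 1) := by
    intro k
    apply hm2 (k + 1)
    refine ⟨hclt _ (hm1 k).1, ?_⟩
    have h2 := qv_spec (t := t) hs k
    rw [show (m k - (t:ℤ)) - rho s t (k+1) = (m k - rho s t k) + (s * qv s t k) by rw [h2]; ring]
    exact dvd_add (hm1 k).2 ⟨qv s t k, rfl⟩
  refine ⟨m, hmdvd, hineq, ?_, hBA⟩
  obtain ⟨N, hN⟩ := p.eventually_zero
  have hnemp : (Finset.univ : Finset (ZMod s)).Nonempty := Finset.univ_nonempty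
  set Lmin := Finset.univ.inf' hnemp m with hL
  set i := max N ((-Lmin - 1).toNat) with hi
  have hfi : p.f i = 0 := hN i (le_max_left _ _)
  have hbi : beta p i = -(i:ℤ) - 1 := by
    simp only [beta, hfi]
    push_cast
    ring
  have hile : -(i:ℤ) - 1 ≤ Lmin := by
    have h1 : ((-Lmin - 1).toNat : ℤ) ≤ (i : ℤ) := by
      exact_mod_cast Nat.cast_le.2 (le_max_right N _)
    have h2 := Int.self_le_toNat (-Lmin - 1)
    omega
  have hx : ∀ k, beta p i ≤ m k := by
    intro k
    rw [hbi]
    exact le_trans hile (Finset.inf'_le _ (Finset.mem_univ k))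
  have hc1 := range_count (beta p) (beta_strictAnti p) i
  have hc2 := abset_count hs hst m hmdvd (beta p i) hx
  rw [show {y | y ∈ AbSet s t m ∧ beta p i < y} = {y | y ∈ Set.range (beta p) ∧ beta p i < y} by
    rw [← betaSet_eq_range, hBA]] at hc2
  rw [hc1, hbi] at hc2
  omega

end Fwd

section Bwd
variable {s t : ℕ} [NeZero s]

lemma abacus_to_core (hs : 0 < s) (ht : 0 < t) (hst : Nat.Coprime s t)
    (m : ZMod s → ℤ) (hm : ∀ k, (s:ℤ) ∣ (m k - rho s t k))
    (hineq : ∀ k, m k - t ≤ m (k + 1))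
    (hsum : (∑ k : ZMod s, (m k - rho s t k) / s) = -(s:ℤ)) :
    ∃ p : Partn, IsCore s p ∧ IsCore t p ∧ betaSet p = AbSet s t m := by
  classical
  have hnemp : (Finset.univ : Finset (ZMod s)).Nonempty := Finset.univ_nonempty
  set Lmin := Finset.univ.inf' hnemp m with hL
  set Lmax := Finset.univ.sup' hnemp m with hLm
  have hne : (AbSet s t m).Nonempty := ⟨m 0, 0, hm 0, le_refl _⟩
  have hbdd : ∀ b ∈ AbSet s t m, b ≤ Lmax := by
    rintro b ⟨k, _, hle⟩
    exact le_trans hle (Finset.le_sup' _ (Finset.mem_univ k))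
  have hcls : ∀ b ∈ AbSet s t m, b - (s:ℤ) ∈ AbSet s t m := by
    rintro b ⟨k, hdvd, hle⟩
    exact ⟨k, by
      rw [show b - (s:ℤ) - rho s t k = (b - rho s t k) + (-1) * s by ring]
      exact dvd_add hdvd ⟨-1, by ring⟩, by omega⟩
  have hclt : ∀ b ∈ AbSet s t m, b - (t:ℤ) ∈ AbSet s t m := by
    rintro b ⟨k, hdvd, hle⟩
    refine ⟨k + 1, ?_, by have := hineq k; omega⟩
    have h2 := qv_spec (t := t) hs k
    rw [show b - (t:ℤ) - rho s t (k+1) = (b - rho s t k) + (s * qv s t k) by rw [h2]; ring]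
    exact dvd_add hdvd ⟨qv s t k, rfl⟩
  obtain ⟨g, hga, hgr⟩ := enum_exists hs hne ⟨Lmax, hbdd⟩ hcls
  -- the crucial index computation : for g i ≤ Lmin, g i = -i-1
  have hkey : ∀ i : ℕ, g i ≤ Lmin → g i = -(i:ℤ) - 1 := by
    intro i hgi
    have hx : ∀ k, g i ≤ m k := fun k =>
      le_trans hgi (Finset.inf'_le _ (Finset.mem_univ k))
    have hc1 := range_count g hga i
    have hc2 := abset_count hs hst m hm (g i) hx
    rw [show {y | y ∈ AbSet s t m ∧ g i < y} = {y | y ∈ Set.range g ∧ g i < y} by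
      rw [hgr]] at hc2
    rw [hc1] at hc2
    rw [hsum] at hc2
    omega
  -- beyond threshold
  set N₀ := (g 0 - Lmin).toNat with hN₀
  have hbig : ∀ i : ℕ, N₀ ≤ i → g i ≤ Lmin := by
    intro i hNi
    have hgap := strictAnti_gap hga 0 i (Nat.zero_le i)
    have h2 := Int.self_le_toNat (g 0 - Lmin)
    have h3 : ((N₀ : ℕ) : ℤ) ≤ (i : ℤ) := by exact_mod_cast hNi
    omega
  have hnonneg : ∀ i : ℕ, 0 ≤ g i + i + 1 := by
    intro i
    have hj := hkey (max i N₀) (hbig _ (le_max_right _ _))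
    have hgap := strictAnti_gap hga i (max i N₀) (le_max_left _ _)
    have : ((max i N₀ : ℕ) : ℤ) ≥ (i:ℤ) := by exact_mod_cast le_max_left i N₀
    omega
  set p : Partn := ⟨fun i => (g i + i + 1).toNat, by
      apply antitone_nat_of_succ_le
      intro n
      have h1 := hga (by omega : n < n + 1)
      omega, by
      refine ⟨N₀, fun i hi => ?_⟩
      have := hkey i (hbig i hi)
      omega⟩ with hp
  have hbeta : beta p = g := by
    funext i
    simp only [beta, hp]
    rw [Int.toNat_of_nonneg (hnonneg i)]
    push_cast
    ring
  have hBS : betaSet p = AbSet s t m := by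
    rw [betaSet_eq_range, hbeta, hgr]
  refine ⟨p, ?_, ?_, hBS⟩
  · rw [isCore_iff p s hs, hBS]
    exact hcls
  · rw [isCore_iff p t ht, hBS]
    exact hclt

end Bwd

section P3Util
variable {s t : ℕ} [NeZero s]

lemma zsum_eq_range {M : Type*} [AddCommMonoid M] (h : ZMod s → M) :
    ∑ k : ZMod s, h k = ∑ n ∈ Finset.range s, h (n : ZMod s) := by
  apply Finset.sum_bij' (fun (k : ZMod s) _ => ZMod.val k) (fun n _ => ((n : ℕ) : ZMod s))
  · intro k _
    simp only [Finset.mem_range]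
    exact ZMod.val_lt k
  · intro n hn
    exact Finset.mem_univ _
  · intro k _
    simp [ZMod.natCast_val, ZMod.cast_id]
  · intro n hn
    simp only [Finset.mem_range] at hn
    exact ZMod.val_cast_of_lt hn
  · intro k _
    rw [ZMod.natCast_val, ZMod.cast_id]

lemma sum_shift (h : ZMod s → ℤ) (c : ZMod s) :
    ∑ k : ZMod s, h (k + c) = ∑ k : ZMod s, h k :=
  Fintype.sum_equiv (Equiv.addRight c) _ _ (fun k => rfl)

lemma sum_qv (hs : 0 < s) (ht : 0 < t) (hst : Nat.Coprime s t) :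
    ∑ k : ZMod s, qv s t k = -(t:ℤ) := by
  have hs0 : (s : ℤ) ≠ 0 := by exact_mod_cast hs.ne'
  apply mul_left_cancel₀ hs0
  rw [Finset.mul_sum]
  rw [Finset.sum_congr rfl (fun k _ => qv_spec hs k)]
  have h1 : ∑ k : ZMod s, rho s t (k + 1) = ∑ k : ZMod s, rho s t k :=
    sum_shift (rho s t) 1
  have h2 : ∑ _k : ZMod s, (t:ℤ) = (s:ℤ) * t := by
    simp [Finset.sum_const, Finset.card_univ, ZMod.card, mul_comm]
  calc ∑ k : ZMod s, (rho s t k - t - rho s t (k+1))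
      = (∑ k : ZMod s, rho s t k) - (∑ _k : ZMod s, (t:ℤ))
        - ∑ k : ZMod s, rho s t (k+1) := by
        rw [Finset.sum_sub_distrib, Finset.sum_sub_distrib]
    _ = -((s:ℤ) * t) := by rw [h1, h2]; ring
    _ = (s:ℤ) * -(t:ℤ) := by ring

lemma double_sum (M : ℕ) (f : ℕ → ℤ) :
    ∑ n ∈ Finset.range M, ∑ j ∈ Finset.range n, f j
      = ∑ j ∈ Finset.range M, ((M:ℤ) - 1 - j) * f j := by
  induction M with
  | zero => simp
  | succ M ih =>
      rw [Finset.sum_range_succ, ih, Finset.sum_range_succ]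
      push_cast
      rw [show ((M:ℤ) + 1 - 1 - M) * f M = 0 by ring, add_zero]
      rw [← Finset.sum_add_distrib]
      apply Finset.sum_congr rfl
      intro j hj
      ring

end P3Util

section AD
variable {s t : ℕ} [NeZero s]

/-- cumulative weight of a `d`-vector. -/
def WD (s t : ℕ) [NeZero s] (d : ZMod s → ℕ) : ℤ :=
  ∑ n ∈ Finset.range s, ∑ j ∈ Finset.range n,
    ((d ((j : ℕ) : ZMod s) : ℤ) + qv s t ((j : ℕ) : ZMod s))

def toD (s t : ℕ) [NeZero s] (a : ZMod s → ℤ) (k : ZMod s) : ℕ :=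
  (a (k + 1) - a k - qv s t k).toNat

def fromD (s t : ℕ) [NeZero s] (d : ZMod s → ℕ) (k : ZMod s) : ℤ :=
  (-1 - (WD s t d) / s)
    + ∑ j ∈ Finset.range (ZMod.val k), ((d ((j : ℕ) : ZMod s) : ℤ) + qv s t ((j : ℕ) : ZMod s))

lemma pref_rec (a : ZMod s → ℤ) (e : ZMod s → ℤ) (hrec : ∀ k, a (k + 1) = a k + e k) :
    ∀ n : ℕ, a ((n : ℕ) : ZMod s) = a 0 + ∑ j ∈ Finset.range n, e ((j : ℕ) : ZMod s) := by
  intro n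
  induction n with
  | zero => simp
  | succ n ih =>
      have hcast : (((n + 1 : ℕ)) : ZMod s) = ((n : ℕ) : ZMod s) + 1 := by push_cast; ring
      rw [hcast, hrec, ih, Finset.sum_range_succ]
      ring

lemma toD_val {a : ZMod s → ℤ} (hineq : ∀ k, a k + qv s t k ≤ a (k + 1)) (k : ZMod s) :
    ((toD s t a k : ℕ) : ℤ) = a (k + 1) - a k - qv s t k := by
  rw [toD, Int.toNat_of_nonneg]
  have := hineq k
  omega

lemma toD_sum {a : ZMod s → ℤ} (hs : 0 < s) (ht : 0 < t) (hst : Nat.Coprime s t)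
    (hineq : ∀ k, a k + qv s t k ≤ a (k + 1)) :
    (∑ k : ZMod s, ((toD s t a k : ℕ) : ℤ)) = t := by
  rw [Finset.sum_congr rfl (fun k _ => toD_val hineq k)]
  have h1 : ∑ k : ZMod s, (a (k+1) - a k - qv s t k)
      = (∑ k : ZMod s, a (k+1)) - (∑ k : ZMod s, a k) - ∑ k : ZMod s, qv s t k := by
    rw [Finset.sum_sub_distrib, Finset.sum_sub_distrib]
  rw [h1, sum_shift a 1, sum_qv hs ht hst]
  ring

lemma toD_W {a : ZMod s → ℤ} (hineq : ∀ k, a k + qv s t k ≤ a (k + 1))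
    (hsum : (∑ k : ZMod s, a k) = -(s:ℤ)) :
    WD s t (toD s t a) = -(s:ℤ) - s * a 0 := by
  have hrec : ∀ k, a (k + 1) = a k + (((toD s t a k : ℕ) : ℤ) + qv s t k) := by
    intro k
    rw [toD_val hineq k]
    ring
  have hpref := pref_rec a _ hrec
  have hW : WD s t (toD s t a)
      = (∑ n ∈ Finset.range s, a ((n : ℕ) : ZMod s)) - s * a 0 := by
    rw [WD]
    rw [Finset.sum_congr rfl (fun n _ => (by
      rw [hpref n]; ring :
      (∑ j ∈ Finset.range n, (((toD s t a ((j:ℕ):ZMod s) : ℕ) : ℤ)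
        + qv s t ((j : ℕ) : ZMod s))) = a ((n : ℕ) : ZMod s) - a 0))]
    rw [Finset.sum_sub_distrib]
    simp [Finset.sum_const, Finset.card_range, mul_comm]
  rw [hW, ← zsum_eq_range a, hsum]

lemma fromD_rec (hs : 0 < s) (ht : 0 < t) (hst : Nat.Coprime s t) {d : ZMod s → ℕ}
    (hsumd : (∑ k : ZMod s, (d k : ℤ)) = t) (k : ZMod s) :
    fromD s t d (k + 1) = fromD s t d k + ((d k : ℤ) + qv s t k) := by
  have hvlt := ZMod.val_lt k
  have hkval : ((ZMod.val k : ℕ) : ZMod s) = k := by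
    rw [ZMod.natCast_val, ZMod.cast_id]
  by_cases hend : ZMod.val k + 1 < s
  · have hval1 : ZMod.val (k + 1) = ZMod.val k + 1 := by
      rw [show k + 1 = ((ZMod.val k + 1 : ℕ) : ZMod s) by push_cast [hkval]; ring]
      exact ZMod.val_cast_of_lt hend
    rw [fromD, fromD, hval1, Finset.sum_range_succ, hkval]
    ring
  · have hends : ZMod.val k + 1 = s := by omega
    have hk1 : k + 1 = 0 := by
      rw [show k + 1 = ((ZMod.val k + 1 : ℕ) : ZMod s) by push_cast [hkval]; ring, hends,
        ZMod.natCast_self]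
    have hfull : ∑ j ∈ Finset.range s, ((d ((j : ℕ) : ZMod s) : ℤ) + qv s t ((j : ℕ) : ZMod s))
        = 0 := by
      rw [Finset.sum_add_distrib]
      have h1 : ∑ j ∈ Finset.range s, (d ((j : ℕ) : ZMod s) : ℤ) = t := by
        rw [← zsum_eq_range (fun k => (d k : ℤ))]
        exact hsumd
      have h2 : ∑ j ∈ Finset.range s, qv s t ((j : ℕ) : ZMod s) = -(t:ℤ) := by
        rw [← zsum_eq_range (qv s t)]
        exact sum_qv hs ht hst
      rw [h1, h2]
      ring
    rw [fromD, fromD, hk1, ZMod.val_zero, Finset.range_zero, Finset.sum_empty]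
    have hsub : (∑ j ∈ Finset.range (ZMod.val k),
        ((d ((j : ℕ) : ZMod s) : ℤ) + qv s t ((j : ℕ) : ZMod s))) + ((d k : ℤ) + qv s t k)
        = ∑ j ∈ Finset.range (ZMod.val k + 1),
            ((d ((j : ℕ) : ZMod s) : ℤ) + qv s t ((j : ℕ) : ZMod s)) := by
      rw [Finset.sum_range_succ, hkval]
    rw [hends] at hsub
    rw [hfull] at hsub
    linarith [hsub]

lemma fromD_sum (hs : 0 < s) {d : ZMod s → ℕ} (hdvd : (s:ℤ) ∣ WD s t d) :
    (∑ k : ZMod s, fromD s t d k) = -(s:ℤ) := by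
  rw [zsum_eq_range (fromD s t d)]
  have hA : ∀ n ∈ Finset.range s, fromD s t d ((n : ℕ) : ZMod s)
      = (-1 - (WD s t d) / s)
        + ∑ j ∈ Finset.range n, ((d ((j : ℕ) : ZMod s) : ℤ) + qv s t ((j : ℕ) : ZMod s)) := by
    intro n hn
    rw [Finset.mem_range] at hn
    rw [fromD, ZMod.val_cast_of_lt hn]
  rw [Finset.sum_congr rfl hA, Finset.sum_add_distrib]
  rw [← WD]
  simp only [Finset.sum_const, Finset.card_range, nsmul_eq_mul]
  have := Int.mul_ediv_cancel' hdvd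
  have hcast : ((s:ℕ):ℤ) ≠ 0 := by exact_mod_cast hs.ne'
  nlinarith [this]

lemma ad_card (hs : 0 < s) (ht : 0 < t) (hst : Nat.Coprime s t) :
    Nat.card {a : ZMod s → ℤ //
        (∀ k, a k + qv s t k ≤ a (k + 1)) ∧ (∑ k : ZMod s, a k) = -(s:ℤ)}
      = Nat.card {d : ZMod s → ℕ //
        (∑ k : ZMod s, (d k : ℤ)) = t ∧ (s:ℤ) ∣ WD s t d} := by
  have hs0 : (s:ℤ) ≠ 0 := by exact_mod_cast hs.ne'
  apply Nat.card_congr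
  refine Equiv.mk
    (fun a => ⟨toD s t a.1, toD_sum hs ht hst a.2.1, ?_⟩)
    (fun d => ⟨fromD s t d.1, ?_, ?_⟩)
    ?_ ?_
  case _ a =>
    rw [toD_W a.2.1 a.2.2]
    exact ⟨-1 - a.1 0, by ring⟩
  case _ d =>
    intro k
    rw [fromD_rec hs ht hst d.2.1 k]
    have : (0:ℤ) ≤ (d.1 k : ℤ) := Int.ofNat_nonneg _
    omega
  case _ d =>
    exact fromD_sum hs d.2.2
  case _ =>
    rintro ⟨a, hineq, hsum⟩
    apply Subtype.ext
    funext k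
    simp only
    have hW := toD_W hineq hsum
    have hWs : WD s t (toD s t a) / s = -1 - a 0 := by
      rw [hW, show -(s:ℤ) - s * a 0 = s * (-1 - a 0) by ring,
        Int.mul_ediv_cancel_left _ hs0]
    have hrec : ∀ k, a (k + 1) = a k + (((toD s t a k : ℕ) : ℤ) + qv s t k) := by
      intro k
      rw [toD_val hineq k]
      ring
    have hpref := pref_rec a _ hrec
    rw [fromD, hWs]
    have := hpref (ZMod.val k)
    rw [ZMod.natCast_val, ZMod.cast_id] at this
    rw [this]
    ring
  case _ =>
    rintro ⟨d, hsumd, hdvd⟩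
    apply Subtype.ext
    funext k
    simp only [toD]
    rw [fromD_rec hs ht hst hsumd k]
    simp

end AD


section Rot
variable {s t : ℕ} [NeZero s]

/-- weight in `ZMod s`. -/
def wt (s : ℕ) [NeZero s] (d : ZMod s → ℕ) : ZMod s :=
  ∑ k : ZMod s, (-1 - k) * (d k : ZMod s)

lemma wd_split (d : ZMod s → ℕ) :
    WD s t d = (∑ n ∈ Finset.range s, ∑ j ∈ Finset.range n, ((d ((j : ℕ) : ZMod s) : ℤ)))
      + (∑ n ∈ Finset.range s, ∑ j ∈ Finset.range n, qv s t ((j : ℕ) : ZMod s)) := by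
  rw [WD, ← Finset.sum_add_distrib]
  apply Finset.sum_congr rfl
  intro n _
  rw [← Finset.sum_add_distrib]

lemma w0_cast (d : ZMod s → ℕ) :
    (((∑ n ∈ Finset.range s, ∑ j ∈ Finset.range n, ((d ((j : ℕ) : ZMod s) : ℤ))) : ℤ) : ZMod s)
      = wt s d := by
  rw [double_sum s (fun j => ((d ((j : ℕ) : ZMod s) : ℤ)))]
  rw [wt, zsum_eq_range (fun k => (-1 - k) * (d k : ZMod s))]
  push_cast
  apply Finset.sum_congr rfl
  intro j _
  push_cast [ZMod.natCast_self]
  ring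

lemma wd_dvd_iff (d : ZMod s → ℕ) :
    ((s:ℤ) ∣ WD s t d) ↔ wt s d
      = -((((∑ n ∈ Finset.range s, ∑ j ∈ Finset.range n, qv s t ((j : ℕ) : ZMod s)) : ℤ) : ZMod s)) := by
  rw [← ZMod.intCast_zmod_eq_zero_iff_dvd, wd_split]
  rw [Int.cast_add, w0_cast]
  constructor
  · intro h
    linear_combination h
  · intro h
    linear_combination h

lemma wt_rot (d : ZMod s → ℕ) (c : ZMod s) :
    wt s (fun k => d (k + c)) = wt s d + c * ∑ k : ZMod s, (d k : ZMod s) := by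
  rw [wt, wt]
  have hre : ∑ k : ZMod s, (-1 - k) * (d (k + c) : ZMod s)
      = ∑ k : ZMod s, (-1 - (k - c)) * (d k : ZMod s) := by
    apply Fintype.sum_equiv (Equiv.addRight c)
    intro k
    simp [Equiv.coe_addRight]
  rw [hre, Finset.mul_sum, ← Finset.sum_add_distrib]
  apply Finset.sum_congr rfl
  intro k _
  ring

lemma rot_card (hs : 0 < s) (ht : 0 < t) (hst : Nat.Coprime s t) :
    Nat.card {d : ZMod s → ℕ // (∑ k : ZMod s, (d k : ℤ)) = t ∧ (s:ℤ) ∣ WD s t d} * s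
      = Nat.card {d : ZMod s → ℕ // (∑ k : ZMod s, (d k : ℤ)) = t} := by
  classical
  set τ : ZMod s :=
    -((((∑ n ∈ Finset.range s, ∑ j ∈ Finset.range n, qv s t ((j : ℕ) : ZMod s)) : ℤ) : ZMod s))
    with hτ
  obtain ⟨u, hu⟩ := (ZMod.isUnit_iff_coprime t s).2 hst.symm
  have hsumcast : ∀ d : ZMod s → ℕ, (∑ k : ZMod s, (d k : ℤ)) = t →
      (∑ k : ZMod s, (d k : ZMod s)) = (t : ZMod s) := by
    intro d hd
    have := congrArg (fun z : ℤ => ((z : ℤ) : ZMod s)) hd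
    push_cast at this
    exact this
  have key : Nat.card ((ZMod s) ×
      {d : ZMod s → ℕ // (∑ k : ZMod s, (d k : ℤ)) = t ∧ (s:ℤ) ∣ WD s t d})
      = Nat.card {d : ZMod s → ℕ // (∑ k : ZMod s, (d k : ℤ)) = t} := by
    apply Nat.card_eq_of_bijective
      (f := fun cd => ⟨fun k => cd.2.1 (k + cd.1), by
        rw [show (∑ k : ZMod s, (cd.2.1 (k + cd.1) : ℤ))
            = ∑ k : ZMod s, (cd.2.1 k : ℤ) from sum_shift (fun k => (cd.2.1 k : ℤ)) cd.1]
        exact cd.2.2.1⟩)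
    constructor
    · rintro ⟨c, d, hd1, hd2⟩ ⟨c', d', hd1', hd2'⟩ heq
      simp only [Subtype.mk_eq_mk] at heq
      have heqf : (fun k => d (k + c)) = (fun k => d' (k + c')) := heq
      have hw : wt s (fun k => d (k + c)) = wt s (fun k => d' (k + c')) := by rw [heqf]
      rw [wt_rot, wt_rot, hsumcast d hd1, hsumcast d' hd1',
        (wd_dvd_iff d).1 hd2, (wd_dvd_iff d').1 hd2'] at hw
      have hcc : c * (t : ZMod s) = c' * (t : ZMod s) := by linear_combination hw
      have hc : c = c' := by
        have h1 : c * (u : ZMod s) = c' * u := by rw [hu]; exact hcc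
        have h2 := congrArg (fun z : ZMod s => z * ↑u⁻¹) h1
        simp only [mul_assoc, Units.mul_inv, mul_one] at h2
        exact h2
      subst hc
      have hdd : d = d' := by
        funext k
        have := congrFun heqf (k - c)
        simpa using this
      simp [hdd]
    · rintro ⟨e, he⟩
      set c : ZMod s := (wt s e - τ) * ↑u⁻¹ with hc
      refine ⟨⟨c, ⟨fun k => e (k + (-c)), ?_, ?_⟩⟩, ?_⟩
      · rw [show (∑ k : ZMod s, (e (k + (-c)) : ℤ))
            = ∑ k : ZMod s, (e k : ℤ) from sum_shift (fun k => (e k : ℤ)) (-c)]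
        exact he
      · rw [wd_dvd_iff]
        rw [wt_rot, hsumcast e he, ← hu, hc]
        have huu : ((wt s e - τ) * ↑u⁻¹) * (u : ZMod s) = wt s e - τ := by
          rw [mul_assoc, Units.inv_mul, mul_one]
        linear_combination -huu
      · apply Subtype.ext
        funext k
        simp
  rw [← key, Nat.card_prod, Nat.card_zmod, mul_comm]

end Rot

section Final
variable {s t : ℕ} [NeZero s]

/-- functions to multisets. -/
noncomputable def msEquiv (s : ℕ) [NeZero s] : (ZMod s → ℕ) ≃ Multiset (ZMod s) := by
  classical
  exact ((Multiset.toFinsupp (α := ZMod s)).toEquiv.trans Finsupp.equivFunOnFinite).symm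

lemma msEquiv_card (d : ZMod s → ℕ) :
    Multiset.card (msEquiv s d) = ∑ k : ZMod s, d k := by
  classical
  have h1 : msEquiv s d
      = Finsupp.toMultiset (Finsupp.equivFunOnFinite.symm d) := by
    simp only [msEquiv]
    exact Multiset.toFinsupp_symm_apply _
  rw [h1, Finsupp.card_toMultiset, Finsupp.sum_fintype _ _ (fun _ => rfl)]
  apply Finset.sum_congr rfl
  intro k _
  simp

lemma dall_card :
    Nat.card {d : ZMod s → ℕ // (∑ k : ZMod s, (d k : ℤ)) = t}
      = (s + t - 1).choose t := by
  classical
  have e2 : {d : ZMod s → ℕ // (∑ k : ZMod s, (d k : ℤ)) = t} ≃ Sym (ZMod s) t :=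
    Equiv.subtypeEquiv (msEquiv s) (by
      intro d
      rw [msEquiv_card d]
      constructor
      · intro h
        exact_mod_cast h
      · intro h
        rw [← h]
        push_cast
        rfl)
  rw [Nat.card_congr e2, Nat.card_eq_fintype_card, Sym.card_sym_eq_choose, ZMod.card]

lemma cores_to_m_card (hs : 0 < s) (ht : 0 < t) (hst : Nat.Coprime s t) :
    Nat.card {p : Partn // IsCore s p ∧ IsCore t p}
      = Nat.card {m : ZMod s → ℤ // (∀ k, (s:ℤ) ∣ (m k - rho s t k)) ∧
          (∀ k, m k - t ≤ m (k + 1)) ∧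
          (∑ k : ZMod s, (m k - rho s t k) / s) = -(s:ℤ)} := by
  have hex : ∀ p : {p : Partn // IsCore s p ∧ IsCore t p},
      ∃ mm : {m : ZMod s → ℤ // (∀ k, (s:ℤ) ∣ (m k - rho s t k)) ∧
          (∀ k, m k - t ≤ m (k + 1)) ∧
          (∑ k : ZMod s, (m k - rho s t k) / s) = -(s:ℤ)},
        betaSet p.1 = AbSet s t mm.1 := by
    rintro ⟨p, hp1, hp2⟩
    obtain ⟨m, h1, h2, h3, h4⟩ := core_to_abacus hs ht hst p hp1 hp2
    exact ⟨⟨m, h1, h2, h3⟩, h4⟩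
  choose F hF using hex
  apply Nat.card_eq_of_bijective F
  constructor
  · intro p p' h
    apply Subtype.ext
    apply partn_eq_of_betaSet_eq
    rw [hF p, hF p', h]
  · rintro ⟨m, hm1, hm2, hm3⟩
    obtain ⟨p, hc1, hc2, hBS⟩ := abacus_to_core hs ht hst m hm1 hm2 hm3
    refine ⟨⟨p, hc1, hc2⟩, ?_⟩
    apply Subtype.ext
    apply abset_unique hs hst (F ⟨p, hc1, hc2⟩).2.1 hm1
    rw [← hF ⟨p, hc1, hc2⟩, hBS]

lemma m_to_a_card (hs : 0 < s) (ht : 0 < t) (hst : Nat.Coprime s t) :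
    Nat.card {m : ZMod s → ℤ // (∀ k, (s:ℤ) ∣ (m k - rho s t k)) ∧
        (∀ k, m k - t ≤ m (k + 1)) ∧
        (∑ k : ZMod s, (m k - rho s t k) / s) = -(s:ℤ)}
      = Nat.card {a : ZMod s → ℤ //
        (∀ k, a k + qv s t k ≤ a (k + 1)) ∧ (∑ k : ZMod s, a k) = -(s:ℤ)} := by
  have hs' : (0:ℤ) < s := by exact_mod_cast hs
  apply Nat.card_congr
  refine Equiv.mk
    (fun m => ⟨fun k => (m.1 k - rho s t k) / s, ?_, ?_⟩)
    (fun a => ⟨fun k => rho s t k + s * a.1 k, fun k => ⟨a.1 k, by ring⟩, ?_, ?_⟩)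
    ?_ ?_
  case _ m =>
    obtain ⟨m, hm1, hm2, hm3⟩ := m
    intro k
    simp only
    have e1 : (s:ℤ) * ((m k - rho s t k) / s) = m k - rho s t k := Int.mul_ediv_cancel' (hm1 k)
    have e2 : (s:ℤ) * ((m (k+1) - rho s t (k+1)) / s) = m (k+1) - rho s t (k+1) :=
      Int.mul_ediv_cancel' (hm1 (k+1))
    have e3 := qv_spec (t := t) hs k
    have := hm2 k
    nlinarith [e1, e2, e3, this]
  case _ m =>
    exact m.2.2.2
  case _ a =>
    obtain ⟨a, ha1, ha2⟩ := a
    intro k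
    simp only
    have e3 := qv_spec (t := t) hs k
    have := ha1 k
    nlinarith [e3, this]
  case _ a =>
    obtain ⟨a, ha1, ha2⟩ := a
    simp only
    have he : ∀ k : ZMod s, (rho s t k + s * a k - rho s t k) / s = a k := by
      intro k
      rw [show rho s t k + (s:ℤ) * a k - rho s t k = s * a k by ring,
        Int.mul_ediv_cancel_left _ (by omega : (s:ℤ) ≠ 0)]
    rw [Finset.sum_congr rfl (fun k _ => he k)]
    exact ha2
  case _ =>
    rintro ⟨m, hm1, hm2, hm3⟩
    apply Subtype.ext
    funext k
    simp only
    rw [Int.mul_ediv_cancel' (hm1 k)]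
    ring
  case _ =>
    rintro ⟨a, ha1, ha2⟩
    apply Subtype.ext
    funext k
    simp only
    rw [show rho s t k + (s:ℤ) * a k - rho s t k = s * a k by ring,
      Int.mul_ediv_cancel_left _ (by omega : (s:ℤ) ≠ 0)]

end Final


/-- Anderson's theorem: the number of `(s,t)`-cores is `(1/(s+t)) * C(s+t, s)`. -/
theorem count_st_cores (s t : ℕ) (hs : 0 < s) (ht : 0 < t) (hst : Nat.Coprime s t) :
    Set.ncard {p : Partn | IsCore s p ∧ IsCore t p} * (s + t) = (s + t).choose s := by
  haveI : NeZero s := ⟨hs.ne'⟩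
  have e1 : s + t - 1 + 1 = s + t := by omega
  have e2 : s - 1 + 1 = s := by omega
  have hsymm : (s + t - 1).choose t = (s + t - 1).choose (s - 1) := by
    rw [← Nat.choose_symm (by omega : s - 1 ≤ s + t - 1)]
    congr 1
    omega
  have hrec := Nat.add_one_mul_choose_eq (s + t - 1) (s - 1)
  rw [e1, e2] at hrec
  have h0 : Set.ncard {p : Partn | IsCore s p ∧ IsCore t p}
      = Nat.card {p : Partn // IsCore s p ∧ IsCore t p} := by
    rw [← Nat.card_coe_set_eq]
    rfl
  have h1 : Set.ncard {p : Partn | IsCore s p ∧ IsCore t p}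
      = Nat.card {d : ZMod s → ℕ // (∑ k : ZMod s, (d k : ℤ)) = t ∧ (s:ℤ) ∣ WD s t d} := by
    rw [h0, cores_to_m_card hs ht hst, m_to_a_card hs ht hst, ad_card hs ht hst]
  have h2 : Nat.card {d : ZMod s → ℕ // (∑ k : ZMod s, (d k : ℤ)) = t ∧ (s:ℤ) ∣ WD s t d} * s
      = (s + t - 1).choose t := by
    rw [rot_card hs ht hst, dall_card]
  apply Nat.eq_of_mul_eq_mul_left hs
  calc s * (Set.ncard {p : Partn | IsCore s p ∧ IsCore t p} * (s + t))
      = (Nat.card {d : ZMod s → ℕ // (∑ k : ZMod s, (d k : ℤ)) = t ∧ (s:ℤ) ∣ WD s t d} * s)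
        * (s + t) := by rw [h1]; ring
    _ = (s + t - 1).choose t * (s + t) := by rw [h2]
    _ = (s + t) * (s + t - 1).choose (s - 1) := by rw [hsymm]; ring
    _ = (s + t).choose s * s := hrec
    _ = s * (s + t).choose s := by ring
end

section
/- If λ is an s-core partition, then the t-core of λ is also an s-core. -/
namespace OlssonAux

def gfun (p : Partn) (i : ℕ) : ℤ := (p.f i : ℤ) - (i + 1)

lemma gfun_strictAnti (p : Partn) : StrictAnti (gfun p) := by
  apply strictAnti_nat_of_succ_lt
  intro n
  have h := p.antitone (Nat.le_succ n)
  simp only [Nat.succ_eq_add_one] at h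
  simp only [gfun]
  push_cast
  omega

lemma mem_betaSet_iff (p : Partn) (x : ℤ) : x ∈ betaSet p ↔ ∃ i, x = gfun p i := Iff.rfl

lemma gfun_ge (p : Partn) (i : ℕ) : -(i + 1 : ℤ) ≤ gfun p i := by
  have : (0 : ℤ) ≤ p.f i := Int.ofNat_nonneg _
  simp only [gfun]
  omega

lemma gfun_tail (p : Partn) {N : ℕ} (hN : ∀ i, N ≤ i → p.f i = 0) {i : ℕ} (hi : N ≤ i) :
    gfun p i = -(i + 1 : ℤ) := by
  simp [gfun, hN i hi]

lemma le_gfun_zero (p : Partn) : ∀ x ∈ betaSet p, x ≤ gfun p 0 := by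
  rintro x ⟨i, rfl⟩
  exact (gfun_strictAnti p).antitone (Nat.zero_le i)

lemma low_mem (p : Partn) : ∃ L : ℤ, L ≤ -1 ∧ ∀ x, x ≤ L → x ∈ betaSet p := by
  obtain ⟨N, hN⟩ := p.eventually_zero
  refine ⟨-(N + 1 : ℤ), by omega, fun x hx => ⟨(-x - 1).toNat, ?_⟩⟩
  rw [hN _ (by omega)]
  push_cast
  omega

lemma charge_eq (p : Partn) {N : ℕ} (hN : ∀ i, N ≤ i → p.f i = 0) {m : ℕ} (hm : N ≤ m) :
    {y | y ∈ betaSet p ∧ -(m + 1 : ℤ) < y}.ncard = m := by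
  have himg : {y | y ∈ betaSet p ∧ -(m + 1 : ℤ) < y} = gfun p '' Set.Iio m := by
    ext y
    simp only [Set.mem_setOf_eq, Set.mem_image, Set.mem_Iio, mem_betaSet_iff]
    constructor
    · rintro ⟨⟨i, rfl⟩, hy⟩
      refine ⟨i, ?_, rfl⟩
      by_contra hc
      push_neg at hc
      have := gfun_tail p hN (le_trans hm hc)
      omega
    · rintro ⟨i, him, rfl⟩
      have := gfun_ge p i
      exact ⟨⟨i, rfl⟩, by omega⟩
  rw [himg, Set.ncard_image_of_injOn ((gfun_strictAnti p).injective.injOn),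
    show (Set.Iio m : Set ℕ) = ↑(Finset.Iio m) by simp, Set.ncard_coe_finset, Nat.card_Iio]

lemma ncard_Iio_nat (n : ℕ) : (Set.Iio n).ncard = n := by
  rw [show (Set.Iio n : Set ℕ) = ↑(Finset.Iio n) from (Finset.coe_Iio n).symm,
    Set.ncard_coe_finset, Nat.card_Iio]

noncomputable def rnk (S : Set ℤ) (b : ℤ) : ℕ := {y | y ∈ S ∧ b < y}.ncard

lemma rnk_fin (S : Set ℤ) (M : ℤ) (hup : ∀ x ∈ S, x ≤ M) (b : ℤ) :
    {y | y ∈ S ∧ b < y}.Finite :=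
  (Set.finite_Icc b M).subset (fun y hy => ⟨le_of_lt hy.2, hup y hy.1⟩)

lemma rnk_lt (S : Set ℤ) (M : ℤ) (hup : ∀ x ∈ S, x ≤ M) {a b : ℤ}
    (hb : b ∈ S) (hab : a < b) : rnk S b < rnk S a := by
  have hsub : insert b {y | y ∈ S ∧ b < y} ⊆ {y | y ∈ S ∧ a < y} := by
    rintro y (rfl | ⟨h1, h2⟩)
    · exact ⟨hb, hab⟩
    · exact ⟨h1, lt_trans hab h2⟩
  have hle := Set.ncard_le_ncard hsub (rnk_fin S M hup a)
  rw [Set.ncard_insert_of_notMem (fun hc => lt_irrefl b hc.2) (rnk_fin S M hup b)] at hle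
  simp only [rnk]
  omega

lemma rnk_inj (S : Set ℤ) (M : ℤ) (hup : ∀ x ∈ S, x ≤ M) {a b : ℤ}
    (ha : a ∈ S) (hb : b ∈ S) (h : rnk S a = rnk S b) : a = b := by
  rcases lt_trichotomy a b with hab | hab | hab
  · have := rnk_lt S M hup hb hab; omega
  · exact hab
  · have := rnk_lt S M hup ha hab; omega

lemma rnk_low (S : Set ℤ) (x0 M : ℤ) (hx0 : x0 ≤ -1)
    (hlow : ∀ x, x ≤ x0 → x ∈ S) (hup : ∀ x ∈ S, x ≤ M)
    (hcharge : {y | y ∈ S ∧ x0 < y}.ncard = (-x0 - 1).toNat)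
    {b : ℤ} (hb : b ≤ x0) : rnk S b = (-b - 1).toNat := by
  have hsplit : {y | y ∈ S ∧ b < y} = Set.Ioc b x0 ∪ {y | y ∈ S ∧ x0 < y} := by
    ext y
    simp only [Set.mem_setOf_eq, Set.mem_union, Set.mem_Ioc]
    constructor
    · rintro ⟨h1, h2⟩
      rcases le_or_gt y x0 with h | h
      · exact Or.inl ⟨h2, h⟩
      · exact Or.inr ⟨h1, h⟩
    · rintro (⟨h1, h2⟩ | ⟨h1, h2⟩)
      · exact ⟨hlow y h2, h1⟩
      · exact ⟨h1, lt_of_le_of_lt hb h2⟩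
  have hdisj : Disjoint (Set.Ioc b x0) {y | y ∈ S ∧ x0 < y} := by
    rw [Set.disjoint_left]
    rintro y ⟨_, h2⟩ ⟨_, h3⟩
    omega
  simp only [rnk]
  rw [hsplit, Set.ncard_union_eq hdisj (Set.finite_Ioc b x0) (rnk_fin S M hup x0), hcharge,
    show Set.Ioc b x0 = ↑(Finset.Ioc b x0) by simp, Set.ncard_coe_finset, Int.card_Ioc]
  omega

lemma rnk_surj (S : Set ℤ) (x0 M : ℤ) (hx0 : x0 ≤ -1)
    (hlow : ∀ x, x ≤ x0 → x ∈ S) (hup : ∀ x ∈ S, x ≤ M)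
    (hcharge : {y | y ∈ S ∧ x0 < y}.ncard = (-x0 - 1).toNat)
    (i : ℕ) : ∃ b, b ∈ S ∧ rnk S b = i := by
  rcases le_or_gt ((-x0 - 1).toNat) i with hi | hi
  · refine ⟨-(i + 1 : ℤ), hlow _ (by omega), ?_⟩
    rw [rnk_low S x0 M hx0 hlow hup hcharge (by omega)]
    omega
  · have hTfin : {y | y ∈ S ∧ x0 < y}.Finite := rnk_fin S M hup x0
    have hrkT : ∀ b ∈ {y | y ∈ S ∧ x0 < y}, rnk S b ∈ Set.Iio ((-x0 - 1).toNat) := by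
      rintro b ⟨hb1, hb2⟩
      have hsub : {y | y ∈ S ∧ b < y} ⊆ {y | y ∈ S ∧ x0 < y} \ {b} := by
        rintro y ⟨h1, h2⟩
        simp only [Set.mem_diff, Set.mem_setOf_eq, Set.mem_singleton_iff]
        exact ⟨⟨h1, lt_trans hb2 h2⟩, by omega⟩
      have hle := Set.ncard_le_ncard hsub (hTfin.diff)
      rw [Set.ncard_diff_singleton_of_mem (show b ∈ {y | y ∈ S ∧ x0 < y} from ⟨hb1, hb2⟩), hcharge] at hle
      simp only [Set.mem_Iio, rnk]
      omega
    have hinj : Set.InjOn (rnk S) {y | y ∈ S ∧ x0 < y} :=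
      fun a ha b hb h => rnk_inj S M hup ha.1 hb.1 h
    have himg : rnk S '' {y | y ∈ S ∧ x0 < y} = Set.Iio ((-x0 - 1).toNat) := by
      apply Set.eq_of_subset_of_ncard_le ?_ ?_ (Set.finite_Iio _)
      · rintro j ⟨b, hb, rfl⟩
        exact hrkT b hb
      · rw [Set.ncard_image_of_injOn hinj, hcharge, ncard_Iio_nat]
    have hmem : i ∈ rnk S '' {y | y ∈ S ∧ x0 < y} := by
      rw [himg]; exact hi
    obtain ⟨b, hb, hbi⟩ := hmem
    exact ⟨b, hb.1, hbi⟩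

lemma exists_partn (S : Set ℤ) (x0 M : ℤ) (hx0 : x0 ≤ -1)
    (hlow : ∀ x, x ≤ x0 → x ∈ S) (hup : ∀ x ∈ S, x ≤ M)
    (hcharge : {y | y ∈ S ∧ x0 < y}.ncard = (-x0 - 1).toNat) :
    ∃ p : Partn, betaSet p = S := by
  choose g hgS hgr using rnk_surj S x0 M hx0 hlow hup hcharge
  set K : ℕ := (-x0 - 1).toNat with hK
  have ganti : ∀ i j : ℕ, i < j → g j < g i := by
    intro i j hij
    rcases lt_trichotomy (g i) (g j) with h | h | h
    · have := rnk_lt S M hup (hgS j) h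
      rw [hgr i, hgr j] at this
      omega
    · have : i = j := by rw [← hgr i, ← hgr j, h]
      omega
    · exact h
  have gap : ∀ i k : ℕ, g (i + k) ≤ g i - k := by
    intro i k
    induction k with
    | zero => simp
    | succ n ih =>
      have h1 := ganti (i + n) (i + n + 1) (by omega)
      have h2 : i + (n + 1) = i + n + 1 := by omega
      rw [h2]
      push_cast
      push_cast at ih
      omega
  have gtail : ∀ i : ℕ, K ≤ i → g i = -(i + 1 : ℤ) := by
    intro i hi
    have hb : (-(i + 1 : ℤ)) ≤ x0 := by omega
    have hr : rnk S (-(i + 1 : ℤ)) = i := by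
      rw [rnk_low S x0 M hx0 hlow hup hcharge hb]
      omega
    exact rnk_inj S M hup (hgS i) (hlow _ hb) (by rw [hgr i, hr])
  have gge : ∀ i : ℕ, -(i + 1 : ℤ) ≤ g i := by
    intro i
    rcases le_or_gt K i with hi | hi
    · rw [gtail i hi]
    · have hgap := gap i (K - i)
      rw [show i + (K - i) = K by omega, gtail K le_rfl] at hgap
      have : ((K - i : ℕ) : ℤ) = (K : ℤ) - i := by omega
      omega
  refine ⟨⟨fun i => (g i + i + 1).toNat, ?_, ⟨K, ?_⟩⟩, ?_⟩
  · apply antitone_nat_of_succ_le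
    intro n
    show (g (n + 1) + ((n + 1 : ℕ) : ℤ) + 1).toNat ≤ (g n + (n : ℤ) + 1).toNat
    have h1 := ganti n (n + 1) (by omega)
    push_cast
    omega
  · intro i hi
    show (g i + (i : ℤ) + 1).toNat = 0
    have := gtail i hi
    omega
  · ext x
    simp only [betaSet, Set.mem_setOf_eq]
    constructor
    · rintro ⟨i, rfl⟩
      show (((g i + i + 1).toNat : ℤ)) - (i + 1) ∈ S
      have h1 := gge i
      have h2 : (((g i + i + 1).toNat : ℤ)) - (i + 1) = g i := by omega
      rw [h2]
      exact hgS i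
    · intro hx
      refine ⟨rnk S x, ?_⟩
      show x = (((g (rnk S x) + (rnk S x) + 1).toNat : ℤ)) - ((rnk S x) + 1)
      have hg : g (rnk S x) = x := rnk_inj S M hup (hgS _) hx (hgr _)
      have h1 := gge (rnk S x)
      rw [hg] at h1
      rw [hg]
      omega

lemma exists_removeHook (d : ℕ) (hd : 0 < d) (p : Partn) (b : ℤ)
    (hb : b ∈ betaSet p) (hbd : b - d ∉ betaSet p) :
    ∃ r, RemoveHook d p r := by
  obtain ⟨N, hN⟩ := p.eventually_zero
  have hdz : (0 : ℤ) < d := by exact_mod_cast hd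
  set m : ℕ := max N (((d : ℤ) - b).toNat + 1) with hm
  have hmN : N ≤ m := le_max_left _ _
  have hm2 : (((d : ℤ) - b).toNat + 1 : ℕ) ≤ m := le_max_right _ _
  have htn : ((d : ℤ) - b) ≤ (((d : ℤ) - b).toNat : ℤ) := Int.self_le_toNat _
  have hmb : -(m + 1 : ℤ) < b - d := by
    have : ((((d : ℤ) - b).toNat + 1 : ℕ) : ℤ) ≤ (m : ℤ) := by exact_mod_cast hm2
    push_cast at this
    omega
  set S' : Set ℤ := insert (b - d) (betaSet p \ {b}) with hS'
  have hup' : ∀ x ∈ S', x ≤ max (gfun p 0) b := by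
    rintro x (rfl | ⟨hx1, _⟩)
    · have := le_max_right (gfun p 0) b
      omega
    · exact le_trans (le_gfun_zero p x hx1) (le_max_left _ _)
  have hlow' : ∀ x, x ≤ -(m + 1 : ℤ) → x ∈ S' := by
    intro x hx
    have hiN : N ≤ (-x - 1).toNat := by omega
    have hfz := hN _ hiN
    have hxB : x ∈ betaSet p := ⟨(-x - 1).toNat, by rw [hfz]; push_cast; omega⟩
    exact Or.inr ⟨hxB, fun hc => by simp at hc; omega⟩
  have hBfin : {y | y ∈ betaSet p ∧ -(m + 1 : ℤ) < y}.Finite :=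
    (Set.finite_Icc (-(m + 1 : ℤ)) (gfun p 0)).subset
      (fun y hy => ⟨le_of_lt hy.2, le_gfun_zero p y hy.1⟩)
  have hchargeB : {y | y ∈ betaSet p ∧ -(m + 1 : ℤ) < y}.ncard = m := charge_eq p hN hmN
  have hbmem : b ∈ {y | y ∈ betaSet p ∧ -(m + 1 : ℤ) < y} := ⟨hb, by omega⟩
  have hm1 : 0 < m := by
    rw [← hchargeB]
    exact (Set.ncard_pos hBfin).mpr ⟨b, hbmem⟩
  have hsplit : {y | y ∈ S' ∧ -(m + 1 : ℤ) < y}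
      = insert (b - d) ({y | y ∈ betaSet p ∧ -(m + 1 : ℤ) < y} \ {b}) := by
    ext y
    simp only [hS', Set.mem_insert_iff, Set.mem_setOf_eq, Set.mem_diff, Set.mem_singleton_iff]
    constructor
    · rintro ⟨(rfl | ⟨h1, h2⟩), h3⟩
      · exact Or.inl rfl
      · exact Or.inr ⟨⟨h1, h3⟩, h2⟩
    · rintro (rfl | ⟨⟨h1, h2⟩, h3⟩)
      · exact ⟨Or.inl rfl, hmb⟩
      · exact ⟨Or.inr ⟨h1, h3⟩, h2⟩
  have hchS' : {y | y ∈ S' ∧ -(m + 1 : ℤ) < y}.ncard = (-(-(m + 1 : ℤ)) - 1).toNat := by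
    rw [hsplit,
      Set.ncard_insert_of_notMem (fun hc => hbd hc.1.1) (hBfin.diff),
      Set.ncard_diff_singleton_of_mem hbmem, hchargeB]
    omega
  obtain ⟨r, hr⟩ := exists_partn S' (-(m + 1 : ℤ)) (max (gfun p 0) b) (by omega) hlow' hup' hchS'
  exact ⟨r, b, hb, hbd, hr⟩

lemma closed_of_no_hook (d : ℕ) (hd : 0 < d) (p : Partn)
    (h : ¬ ∃ r, RemoveHook d p r) : ∀ b ∈ betaSet p, b - d ∈ betaSet p := by
  intro b hb
  by_contra hc
  exact h (exists_removeHook d hd p b hb hc)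

def Aset (t : ℕ) (S : Set ℤ) (y : ℤ) : Set ℤ := {x | x ∈ S ∧ (t : ℤ) ∣ (x - y) ∧ y ≤ x}

def Rset (t : ℕ) (S : Set ℤ) (y : ℤ) : Set ℤ := {z | z ∉ S ∧ (t : ℤ) ∣ (z - y) ∧ z < y}

noncomputable def Dval (t : ℕ) (S : Set ℤ) (y : ℤ) : ℤ :=
  ((Aset t S y).ncard : ℤ) - ((Rset t S y).ncard : ℤ)

lemma Aset_finite (t : ℕ) (p : Partn) (y : ℤ) : (Aset t (betaSet p) y).Finite := by
  apply (Set.finite_Icc y (gfun p 0)).subset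
  rintro x ⟨hx, _, hyx⟩
  exact ⟨hyx, le_gfun_zero p x hx⟩

lemma Rset_finite (t : ℕ) (p : Partn) (y : ℤ) : (Rset t (betaSet p) y).Finite := by
  obtain ⟨L, hL1, hL⟩ := low_mem p
  apply (Set.finite_Icc L y).subset
  rintro z ⟨hz, _, hzy⟩
  refine ⟨?_, le_of_lt hzy⟩
  by_contra hc
  push_neg at hc
  exact hz (hL z (by omega))


lemma Dval_step (t : ℕ) (ht : 0 < t) (p q : Partn) (h : RemoveHook t p q) (y : ℤ) :
    Dval t (betaSet q) y = Dval t (betaSet p) y := by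
  obtain ⟨b, hb, hbt, hq⟩ := h
  have htz : (0 : ℤ) < t := by exact_mod_cast ht
  by_cases hdvd : (t : ℤ) ∣ (b - y)
  · have hdvd2 : (t : ℤ) ∣ (b - t - y) := by
      have := dvd_sub hdvd (dvd_refl (t : ℤ))
      rwa [show b - y - (t : ℤ) = b - t - y by ring] at this
    rcases le_or_gt y (b - t) with hy | hy
    · -- y ≤ b - t
      have hA : Aset t (betaSet q) y = insert (b - t) (Aset t (betaSet p) y \ {b}) := by
        ext x
        simp only [Aset, Set.mem_setOf_eq, hq, Set.mem_insert_iff, Set.mem_diff,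
          Set.mem_singleton_iff]
        constructor
        · rintro ⟨(rfl | ⟨h1, hne⟩), h2, h3⟩
          · exact Or.inl rfl
          · exact Or.inr ⟨⟨h1, h2, h3⟩, hne⟩
        · rintro (rfl | ⟨⟨h1, h2, h3⟩, hne⟩)
          · exact ⟨Or.inl rfl, hdvd2, hy⟩
          · exact ⟨Or.inr ⟨h1, hne⟩, h2, h3⟩
      have hR : Rset t (betaSet q) y = Rset t (betaSet p) y := by
        ext z
        simp only [Rset, Set.mem_setOf_eq, hq, Set.mem_insert_iff, Set.mem_diff,
          Set.mem_singleton_iff]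
        constructor
        · rintro ⟨h1, h2, h3⟩
          exact ⟨fun hz => h1 (Or.inr ⟨hz, by omega⟩), h2, h3⟩
        · rintro ⟨h1, h2, h3⟩
          refine ⟨?_, h2, h3⟩
          rintro (rfl | ⟨hz, -⟩)
          · omega
          · exact h1 hz
      have hbmem : b ∈ Aset t (betaSet p) y := ⟨hb, hdvd, by omega⟩
      have h1 : 0 < (Aset t (betaSet p) y).ncard :=
        (Set.ncard_pos (Aset_finite t p y)).mpr ⟨b, hbmem⟩
      rw [Dval, Dval, hA, hR,
        Set.ncard_insert_of_notMem (fun hc => hbt hc.1.1) ((Aset_finite t p y).diff),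
        Set.ncard_diff_singleton_of_mem hbmem]
      omega
    · rcases le_or_gt y b with hy2 | hy2
      · -- b - t < y ≤ b
        have hA : Aset t (betaSet q) y = Aset t (betaSet p) y \ {b} := by
          ext x
          simp only [Aset, Set.mem_setOf_eq, hq, Set.mem_insert_iff, Set.mem_diff,
            Set.mem_singleton_iff]
          constructor
          · rintro ⟨(rfl | ⟨h1, hne⟩), h2, h3⟩
            · omega
            · exact ⟨⟨h1, h2, h3⟩, hne⟩
          · rintro ⟨⟨h1, h2, h3⟩, hne⟩
            exact ⟨Or.inr ⟨h1, hne⟩, h2, h3⟩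
        have hR : Rset t (betaSet q) y = Rset t (betaSet p) y \ {b - t} := by
          ext z
          simp only [Rset, Set.mem_setOf_eq, hq, Set.mem_insert_iff, Set.mem_diff,
            Set.mem_singleton_iff]
          constructor
          · rintro ⟨h1, h2, h3⟩
            exact ⟨⟨fun hz => h1 (Or.inr ⟨hz, by omega⟩), h2, h3⟩, fun hc => h1 (Or.inl hc)⟩
          · rintro ⟨⟨h1, h2, h3⟩, hne⟩
            refine ⟨?_, h2, h3⟩
            rintro (rfl | ⟨hz, -⟩)
            · exact hne rfl
            · exact h1 hz
        have hbmem : b ∈ Aset t (betaSet p) y := ⟨hb, hdvd, hy2⟩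
        have hbtmem : b - t ∈ Rset t (betaSet p) y := ⟨hbt, hdvd2, hy⟩
        have h1 : 0 < (Aset t (betaSet p) y).ncard :=
          (Set.ncard_pos (Aset_finite t p y)).mpr ⟨b, hbmem⟩
        have h2 : 0 < (Rset t (betaSet p) y).ncard :=
          (Set.ncard_pos (Rset_finite t p y)).mpr ⟨_, hbtmem⟩
        rw [Dval, Dval, hA, hR, Set.ncard_diff_singleton_of_mem hbmem,
          Set.ncard_diff_singleton_of_mem hbtmem]
        omega
      · -- b < y
        have hA : Aset t (betaSet q) y = Aset t (betaSet p) y := by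
          ext x
          simp only [Aset, Set.mem_setOf_eq, hq, Set.mem_insert_iff, Set.mem_diff,
            Set.mem_singleton_iff]
          constructor
          · rintro ⟨(rfl | ⟨h1, hne⟩), h2, h3⟩
            · omega
            · exact ⟨h1, h2, h3⟩
          · rintro ⟨h1, h2, h3⟩
            exact ⟨Or.inr ⟨h1, by omega⟩, h2, h3⟩
        have hR : Rset t (betaSet q) y = insert b (Rset t (betaSet p) y \ {b - t}) := by
          ext z
          simp only [Rset, Set.mem_setOf_eq, hq, Set.mem_insert_iff, Set.mem_diff,
            Set.mem_singleton_iff]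
          constructor
          · rintro ⟨h1, h2, h3⟩
            rcases eq_or_ne z b with rfl | hzb
            · exact Or.inl rfl
            · exact Or.inr ⟨⟨fun hz => h1 (Or.inr ⟨hz, hzb⟩), h2, h3⟩, fun hc => h1 (Or.inl hc)⟩
          · rintro (rfl | ⟨⟨h1, h2, h3⟩, hne⟩)
            · refine ⟨?_, hdvd, hy2⟩
              rintro (hc | ⟨-, hne⟩)
              · omega
              · exact hne rfl
            · refine ⟨?_, h2, h3⟩
              rintro (rfl | ⟨hz, -⟩)
              · exact hne rfl
              · exact h1 hz
        have hbtmem : b - t ∈ Rset t (betaSet p) y := ⟨hbt, hdvd2, by omega⟩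
        have hbnot : b ∉ Rset t (betaSet p) y \ {b - t} := fun hc => hc.1.1 hb
        have h2 : 0 < (Rset t (betaSet p) y).ncard :=
          (Set.ncard_pos (Rset_finite t p y)).mpr ⟨_, hbtmem⟩
        rw [Dval, Dval, hA, hR, Set.ncard_insert_of_notMem hbnot ((Rset_finite t p y).diff),
          Set.ncard_diff_singleton_of_mem hbtmem]
        omega
  · -- t does not divide b - y
    have key1 : ∀ x : ℤ, (t : ℤ) ∣ (x - y) → x ≠ b ∧ x ≠ b - t := by
      intro x hx
      constructor <;> rintro rfl
      · exact hdvd hx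
      · apply hdvd
        have := dvd_add hx (dvd_refl (t : ℤ))
        rwa [show b - (t : ℤ) - y + t = b - y by ring] at this
    have hA : Aset t (betaSet q) y = Aset t (betaSet p) y := by
      ext x
      simp only [Aset, Set.mem_setOf_eq, hq, Set.mem_insert_iff, Set.mem_diff,
        Set.mem_singleton_iff]
      constructor
      · rintro ⟨h1, h2, h3⟩
        obtain ⟨hxb, hxbt⟩ := key1 x h2
        rcases h1 with rfl | ⟨h1, -⟩
        · exact absurd rfl hxbt
        · exact ⟨h1, h2, h3⟩
      · rintro ⟨h1, h2, h3⟩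
        obtain ⟨hxb, hxbt⟩ := key1 x h2
        exact ⟨Or.inr ⟨h1, hxb⟩, h2, h3⟩
    have hR : Rset t (betaSet q) y = Rset t (betaSet p) y := by
      ext z
      simp only [Rset, Set.mem_setOf_eq, hq, Set.mem_insert_iff, Set.mem_diff,
        Set.mem_singleton_iff]
      constructor
      · rintro ⟨h1, h2, h3⟩
        obtain ⟨hzb, hzbt⟩ := key1 z h2
        exact ⟨fun hz => h1 (Or.inr ⟨hz, hzb⟩), h2, h3⟩
      · rintro ⟨h1, h2, h3⟩
        obtain ⟨hzb, hzbt⟩ := key1 z h2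
        refine ⟨?_, h2, h3⟩
        rintro (rfl | ⟨hz, -⟩)
        · exact hzbt rfl
        · exact h1 hz
    rw [Dval, Dval, hA, hR]

lemma Dval_chain (t : ℕ) (ht : 0 < t) (p q : Partn)
    (hpq : Relation.ReflTransGen (RemoveHook t) p q) (y : ℤ) :
    Dval t (betaSet q) y = Dval t (betaSet p) y := by
  induction hpq with
  | refl => rfl
  | tail _ h ih => rw [Dval_step t ht _ _ h y, ih]

lemma iterate_closed (d : ℕ) {S : Set ℤ} (hcl : ∀ b ∈ S, b - d ∈ S) :
    ∀ (k : ℕ), ∀ b ∈ S, b - d * k ∈ S := by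
  intro k
  induction k with
  | zero => intro b hb; simpa using hb
  | succ n ih =>
    intro b hb
    have h := hcl _ (ih b hb)
    rwa [show b - (d : ℤ) * n - d = b - d * ((n : ℕ) + 1 : ℕ) by push_cast; ring] at h

lemma mem_of_dvd_le (d : ℕ) (hd : 0 < d) {S : Set ℤ} (hcl : ∀ b ∈ S, b - d ∈ S)
    {x y : ℤ} (hx : x ∈ S) (hdvd : (d : ℤ) ∣ (x - y)) (hyx : y ≤ x) : y ∈ S := by
  obtain ⟨c, hc⟩ := hdvd
  have hdz : (0 : ℤ) < d := by exact_mod_cast hd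
  have hc0 : 0 ≤ c := by
    by_contra hcon
    push_neg at hcon
    have : (d : ℤ) * c < 0 := mul_neg_of_pos_of_neg hdz hcon
    linarith
  have h := iterate_closed d hcl c.toNat x hx
  rwa [show x - (d : ℤ) * c.toNat = y by rw [Int.toNat_of_nonneg hc0]; linarith] at h

lemma mem_iff_pos (t : ℕ) (ht : 0 < t) (p : Partn)
    (hcl : ∀ b ∈ betaSet p, b - t ∈ betaSet p) (y : ℤ) :
    y ∈ betaSet p ↔ 0 < Dval t (betaSet p) y := by
  constructor
  · intro hy
    have hR : Rset t (betaSet p) y = ∅ := by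
      ext z
      simp only [Rset, Set.mem_setOf_eq, Set.mem_empty_iff_false, iff_false, not_and]
      intro h1 h2 h3
      apply h1
      have h2' : (t : ℤ) ∣ (y - z) := by
        rw [show y - z = -(z - y) by ring]
        exact dvd_neg.mpr h2
      exact mem_of_dvd_le t ht hcl hy h2' (le_of_lt h3)
    have hA : 0 < (Aset t (betaSet p) y).ncard :=
      (Set.ncard_pos (Aset_finite t p y)).mpr ⟨y, hy, by simp, le_refl y⟩
    rw [Dval, hR, Set.ncard_empty]
    omega
  · intro hD
    by_contra hy
    have hA : Aset t (betaSet p) y = ∅ := by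
      ext x
      simp only [Aset, Set.mem_setOf_eq, Set.mem_empty_iff_false, iff_false, not_and]
      intro h1 h2 h3
      exact hy (mem_of_dvd_le t ht hcl h1 h2 h3)
    rw [Dval, hA, Set.ncard_empty] at hD
    omega

lemma Dval_mono (s t : ℕ) (hs : 0 < s) (p : Partn)
    (hcl : ∀ b ∈ betaSet p, b - s ∈ betaSet p) (y : ℤ) :
    Dval t (betaSet p) y ≤ Dval t (betaSet p) (y - s) := by
  have hsz : (0 : ℤ) < s := by exact_mod_cast hs
  have hA : (Aset t (betaSet p) y).ncard ≤ (Aset t (betaSet p) (y - s)).ncard := by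
    refine Set.ncard_le_ncard_of_injOn (fun x => x - s) ?_ ?_ (Aset_finite t p (y - s))
    · rintro x ⟨h1, h2, h3⟩
      refine ⟨hcl x h1, ?_, ?_⟩
      · show (t : ℤ) ∣ (x - s - (y - s))
        rwa [show x - (s : ℤ) - (y - s) = x - y by ring]
      · show y - (s : ℤ) ≤ x - s
        omega
    · intro a _ b _ h
      simpa using h
  have hR : (Rset t (betaSet p) (y - s)).ncard ≤ (Rset t (betaSet p) y).ncard := by
    refine Set.ncard_le_ncard_of_injOn (fun z => z + s) ?_ ?_ (Rset_finite t p y)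
    · rintro z ⟨h1, h2, h3⟩
      refine ⟨fun hz => h1 ?_, ?_, ?_⟩
      · have h := hcl _ hz
        rwa [show z + (s : ℤ) - s = z by ring] at h
      · show (t : ℤ) ∣ (z + s - y)
        rwa [show z + (s : ℤ) - y = z - (y - s) by ring]
      · show z + (s : ℤ) < y
        omega
    · intro a _ b _ h
      simpa using h
  rw [Dval, Dval]
  omega

end OlssonAux

/-- Olsson's theorem: if `λ` is an `s`-core then the `t`-core of `λ`
(obtained by repeatedly removing rim `t`-hooks until none remain) is an `s`-core. -/
theorem tcore_of_score_is_score (s t : ℕ) (hs : 0 < s) (ht : 0 < t) (p q : Partn)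
    (hp : ¬ ∃ r, RemoveHook s p r)
    (hpq : Relation.ReflTransGen (RemoveHook t) p q)
    (hq : ¬ ∃ r, RemoveHook t q r) :
    ¬ ∃ r, RemoveHook s q r := by
  rintro ⟨r, b, hbq, hbs, -⟩
  have Hs := OlssonAux.closed_of_no_hook s hs p hp
  have Ht := OlssonAux.closed_of_no_hook t ht q hq
  have h1 : 0 < OlssonAux.Dval t (betaSet q) b := (OlssonAux.mem_iff_pos t ht q Ht b).mp hbq
  have h2 : ¬ 0 < OlssonAux.Dval t (betaSet q) (b - s) :=
    fun h => hbs ((OlssonAux.mem_iff_pos t ht q Ht (b - s)).mpr h)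
  rw [OlssonAux.Dval_chain t ht p q hpq] at h1 h2
  exact h2 (lt_of_lt_of_le h1 (OlssonAux.Dval_mono s t hs p Hs b))
end

section
/- Suppose w is an element of the affine symmetric group W̃_s, m ∈ ℤ, and i ∈ ℤ satisfies it ≡ m + (s-1)(t-1)/2 (mod s). Then the level-t action of w on ℤ satisfies ẘ(m) = m + t(w(i) - i). -/
lemma lt_aux_dvd_add_mul (s x k : ℤ) : s ∣ (x + k * s) ↔ s ∣ x := by
  constructor
  · intro h
    have h2 : s ∣ k * s := dvd_mul_left s k
    have := h.sub h2
    simpa using this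
  · intro h
    exact h.add (dvd_mul_left s k)

lemma lt_aux_not_dvd_one (s : ℕ) (hs : 2 ≤ s) : ¬ ((s:ℤ) ∣ 1) := by
  intro h
  have := Int.le_of_dvd one_pos h
  omega

lemma genFun_add_mul (s : ℕ) (a : ℤ) (x k : ℤ) :
    genFun s a (x + k * s) = genFun s a x + k * s := by
  unfold genFun
  rw [show x + k*(s:ℤ) - a = (x - a) + k * s by ring]
  rw [show x - a + k*(s:ℤ) - 1 = (x - a - 1) + k*s by ring]
  simp only [lt_aux_dvd_add_mul]
  split_ifs <;> ring

lemma genFun_shift (s : ℕ) (a : ℤ) (x : ℤ) : genFun s a (x + s) = genFun s a x + s := by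
  simpa using genFun_add_mul s a x 1

lemma genFun_cases (s : ℕ) (a x : ℤ) :
    genFun s a x = x + 1 ∨ genFun s a x = x - 1 ∨ genFun s a x = x := by
  unfold genFun; split_ifs <;> tauto

lemma genFun_eq_add_one (s : ℕ) (a x : ℤ) (h : (s:ℤ) ∣ (x - a)) : genFun s a x = x + 1 := by
  unfold genFun; rw [if_pos h]

lemma genFun_eq_sub_one (s : ℕ) (hs : 2 ≤ s) (a x : ℤ) (h : (s:ℤ) ∣ (x - (a+1))) :
    genFun s a x = x - 1 := by
  have h1 : ¬ (s:ℤ) ∣ (x - a) := by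
    intro h2
    have := h2.sub h
    have h3 : (s:ℤ) ∣ 1 := by simpa [show x - a - (x - (a+1)) = 1 by ring] using this
    exact lt_aux_not_dvd_one s hs h3
  unfold genFun
  rw [if_neg h1, if_pos (by rw [show x - a - 1 = x - (a+1) by ring]; exact h)]

lemma genFun_add_one_imp (s : ℕ) (a x : ℤ) (h : genFun s a x = x + 1) : (s:ℤ) ∣ (x - a) := by
  by_contra hc
  unfold genFun at h
  rw [if_neg hc] at h
  split_ifs at h <;> omega

lemma perm_shift_mul (s : ℕ) (w : Equiv.Perm ℤ) (hw : ∀ m : ℤ, w (m + s) = w m + s)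
    (k m : ℤ) : w (m + k * s) = w m + k * s := by
  induction k using Int.induction_on with
  | zero => simp
  | succ n ih =>
      have h := hw (m + (n:ℤ) * s)
      rw [show m + ((n:ℤ)+1) * s = (m + (n:ℤ)*s) + s by ring, h, ih]
      ring
  | pred n ih =>
      have h := hw (m + (-(n:ℤ)-1) * s)
      rw [show (m + (-(n:ℤ)-1)*s) + (s:ℤ) = m + (-(n:ℤ))*s by ring] at h
      linear_combination ih - h

lemma gauss_sum (s : ℕ) : (∑ i ∈ Finset.range s, ((i:ℤ))) = (s.choose 2 : ℤ) := by
  have h2 := Finset.sum_range_id_mul_two s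
  have h3 : s.choose 2 = s * (s-1) / 2 := Nat.choose_two_right s
  have h4 : (∑ i ∈ Finset.range s, i) = s.choose 2 := by omega
  rw [← h4]
  push_cast
  rfl

lemma one_mem_affSym (s : ℕ) : (1 : Equiv.Perm ℤ) ∈ AffSymSet s := by
  constructor
  · intro m; simp
  · simpa using gauss_sum s

lemma genPerm_apply (s : ℕ) (hs : 2 ≤ s) (a x : ℤ) : genPerm s hs a x = genFun s a x := rfl

lemma mul_genPerm_apply (s : ℕ) (hs : 2 ≤ s) (w : Equiv.Perm ℤ) (a x : ℤ) :
    (w * genPerm s hs a) x = w (genFun s a x) := rfl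

lemma int_eq_of_dvd_window (s : ℕ) (x y : ℤ) (hdvd : (s:ℤ) ∣ (x - y))
    (hx1 : 0 ≤ x) (hx2 : x < s) (hy1 : 0 ≤ y) (hy2 : y < s) : x = y := by
  have h := Int.eq_zero_of_abs_lt_dvd hdvd (abs_lt.mpr ⟨by omega, by omega⟩)
  omega

lemma mul_genPerm_mem (s : ℕ) (hs : 2 ≤ s) (w : Equiv.Perm ℤ) (hw : w ∈ AffSymSet s) (a : ℤ) :
    w * genPerm s hs a ∈ AffSymSet s := by
  obtain ⟨hw1, hw2⟩ := hw
  have hs0 : (0:ℤ) < s := by exact_mod_cast Nat.pos_of_ne_zero (by omega)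
  constructor
  · intro m
    rw [mul_genPerm_apply, mul_genPerm_apply, genFun_shift, hw1]
  · -- sum
    set n₁ : ℕ := (a % s).toNat with hn₁def
    set n₂ : ℕ := ((a+1) % s).toNat with hn₂def
    have hc₁ : (n₁ : ℤ) = a % s := Int.toNat_of_nonneg (Int.emod_nonneg a (by omega))
    have hc₂ : (n₂ : ℤ) = (a+1) % s := Int.toNat_of_nonneg (Int.emod_nonneg (a+1) (by omega))
    have hlt₁ : n₁ < s := by
      have := Int.emod_lt_of_pos a hs0; omega
    have hlt₂ : n₂ < s := by
      have := Int.emod_lt_of_pos (a+1) hs0; omega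
    have hd₁ : (s:ℤ) ∣ ((n₁:ℤ) - a) := by
      rw [hc₁]
      have := Int.emod_add_ediv_mul a s
      exact ⟨-(a / s), by linarith⟩
    have hd₂ : (s:ℤ) ∣ ((n₂:ℤ) - (a+1)) := by
      rw [hc₂]
      have := Int.emod_add_ediv_mul (a+1) s
      exact ⟨-((a+1) / s), by linarith⟩
    have hne : n₁ ≠ n₂ := by
      intro h
      have h2 := hd₂.sub hd₁
      rw [h] at h2
      have h3 : (s:ℤ) ∣ 1 := by
        have h4 : (n₂:ℤ) - (a+1) - ((n₂:ℤ) - a) = -1 := by ring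
        rw [h4] at h2
        exact (dvd_neg.mp h2)
      exact lt_aux_not_dvd_one s hs h3
    -- the difference function
    set f : ℕ → ℤ := fun i => w (genFun s a i) - w i with hf
    have hsum : ∑ i ∈ Finset.range s, (w * genPerm s hs a) (i:ℤ)
        = (∑ i ∈ Finset.range s, w (i:ℤ)) + ∑ i ∈ Finset.range s, f i := by
      rw [← Finset.sum_add_distrib]
      refine Finset.sum_congr rfl fun i _ => ?_
      rw [mul_genPerm_apply]; simp [hf]
    have hzero : ∀ i ∈ Finset.range s, i ∉ ({n₁, n₂} : Finset ℕ) → f i = 0 := by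
      intro i hi hni
      simp only [Finset.mem_insert, Finset.mem_singleton] at hni
      push_neg at hni
      have hig : genFun s a (i:ℤ) = i := by
        unfold genFun
        rw [if_neg, if_neg]
        · intro hdd
          have : (s:ℤ) ∣ ((i:ℤ) - n₂) := by
            have := hdd.sub hd₂
            simpa [show (i:ℤ) - a - 1 - ((n₂:ℤ) - (a+1)) = (i:ℤ) - n₂ by ring] using this
          have := int_eq_of_dvd_window s i n₂ this (by positivity) (by exact_mod_cast Finset.mem_range.mp hi) (by positivity) (by exact_mod_cast hlt₂)
          exact hni.2 (by exact_mod_cast this)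
        · intro hdd
          have : (s:ℤ) ∣ ((i:ℤ) - n₁) := by
            have := hdd.sub hd₁
            simpa [show (i:ℤ) - a - ((n₁:ℤ) - a) = (i:ℤ) - n₁ by ring] using this
          have := int_eq_of_dvd_window s i n₁ this (by positivity) (by exact_mod_cast Finset.mem_range.mp hi) (by positivity) (by exact_mod_cast hlt₁)
          exact hni.1 (by exact_mod_cast this)
      simp [hf, hig]
    have hsub : ({n₁, n₂} : Finset ℕ) ⊆ Finset.range s := by
      intro x hx
      simp only [Finset.mem_insert, Finset.mem_singleton] at hx
      rcases hx with h | h <;> simp [h, Finset.mem_range, hlt₁, hlt₂]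
    have hsum2 : ∑ i ∈ Finset.range s, f i = ∑ i ∈ ({n₁, n₂} : Finset ℕ), f i :=
      (Finset.sum_subset hsub (by intro x hx hnx; exact hzero x hx hnx)).symm
    have hfn₁ : f n₁ = w ((n₁:ℤ) + 1) - w n₁ := by
      simp [hf, genFun_eq_add_one s a _ hd₁]
    have hfn₂ : f n₂ = w ((n₂:ℤ) - 1) - w n₂ := by
      simp [hf, genFun_eq_sub_one s hs a _ hd₂]
    -- relation between n₁ and n₂
    have hrel : (s:ℤ) ∣ ((n₁:ℤ) + 1 - n₂) := by
      have := hd₁.sub hd₂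
      simpa [show (n₁:ℤ) - a - ((n₂:ℤ) - (a+1)) = (n₁:ℤ) + 1 - n₂ by ring] using this
    have hcases : (n₁:ℤ) + 1 - n₂ = 0 ∨ (n₁:ℤ) + 1 - n₂ = s := by
      by_cases hz : (n₁:ℤ) + 1 - n₂ = 0
      · left; exact hz
      · right
        have habs : (s:ℤ) ≤ |(n₁:ℤ) + 1 - n₂| :=
          Int.le_of_dvd (abs_pos.mpr hz) ((dvd_abs _ _).mpr hrel)
        have h1 : (n₁:ℤ) < s := by exact_mod_cast hlt₁
        have h2 : (n₂:ℤ) < s := by exact_mod_cast hlt₂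
        have h3 : (0:ℤ) ≤ n₁ := by positivity
        have h4 : (0:ℤ) ≤ n₂ := by positivity
        rcases le_or_gt 0 ((n₁:ℤ) + 1 - n₂) with hp | hn
        · rw [abs_of_nonneg hp] at habs; omega
        · rw [abs_of_neg hn] at habs; omega
    have hfsum : f n₁ + f n₂ = 0 := by
      rcases hcases with h | h
      · have : (n₂:ℤ) = (n₁:ℤ) + 1 := by omega
        rw [hfn₁, hfn₂, this]
        ring
      · -- n₁ = s - 1, n₂ = 0
        have he₁ : (n₁:ℤ) + 1 = (n₂:ℤ) + s := by omega
        have hv₁ : w ((n₁:ℤ) + 1) = w n₂ + s := by rw [he₁, hw1]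
        have he₂ : (n₂:ℤ) - 1 = (n₁:ℤ) - s := by omega
        have hv₂ : w ((n₂:ℤ) - 1) = w n₁ - s := by
          have := hw1 ((n₁:ℤ) - s)
          rw [show (n₁:ℤ) - s + s = (n₁:ℤ) by ring] at this
          rw [he₂]; omega
        rw [hfn₁, hfn₂, hv₁, hv₂]
        ring
    rw [hsum, hsum2, Finset.sum_pair hne, hfsum, hw2]
    ring

/-- The inversion set of an affine permutation, first coordinate in the window `[0,s)`. -/
def InvSet (s : ℕ) (w : Equiv.Perm ℤ) : Set (ℤ × ℤ) :=
  {p | 0 ≤ p.1 ∧ p.1 < s ∧ p.1 < p.2 ∧ w p.2 < w p.1}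

lemma invSet_finite (s : ℕ) (hs : 2 ≤ s) (w : Equiv.Perm ℤ)
    (hw : ∀ m : ℤ, w (m + s) = w m + s) : (InvSet s w).Finite := by
  have hs0 : (0:ℤ) < s := by exact_mod_cast Nat.pos_of_ne_zero (by omega)
  set F : Finset ℤ := (Finset.range s).image (fun i : ℕ => w (i:ℤ)) with hF
  have hFne : F.Nonempty :=
    ⟨w 0, Finset.mem_image.mpr ⟨0, Finset.mem_range.mpr (by omega), by simp⟩⟩
  set lo := F.min' hFne
  set hi := F.max' hFne
  have hmem : ∀ x : ℤ, 0 ≤ x → x < s → w x ∈ F := by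
    intro x h1 h2
    simp only [hF, Finset.mem_image, Finset.mem_range]
    exact ⟨x.toNat, by omega, by rw [Int.toNat_of_nonneg h1]⟩
  apply Set.Finite.subset ((Set.finite_Icc (0:ℤ) s).prod (Set.finite_Icc (0:ℤ) (hi - lo + s)))
  rintro ⟨p1, p2⟩ ⟨h1, h2, h3, h4⟩
  simp only [Set.mem_prod, Set.mem_Icc]
  have hup : w p1 ≤ hi := F.le_max' _ (hmem p1 h1 h2)
  have hmod1 : (0:ℤ) ≤ p2 % s := Int.emod_nonneg p2 (by omega)
  have hmod2 : p2 % s < s := Int.emod_lt_of_pos p2 hs0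
  have hlo : lo ≤ w (p2 % s) := F.min'_le _ (hmem _ hmod1 hmod2)
  have hval : w p2 = w (p2 % s) + (p2 / s) * s := by
    have := perm_shift_mul s w hw (p2 / s) (p2 % s)
    rwa [Int.emod_add_ediv_mul p2 s] at this
  have hq : (p2 / s) * s ≤ hi - lo := by
    simp only at h4
    omega
  have hp2 : p2 = p2 % s + (p2 / s) * s := (Int.emod_add_ediv_mul p2 s).symm
  constructor
  · constructor <;> omega
  · constructor <;> omega

lemma eq_one_of_no_descent (s : ℕ) (hs : 2 ≤ s) (w : Equiv.Perm ℤ) (hw : w ∈ AffSymSet s)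
    (h : ∀ a : ℤ, 0 ≤ a → a < s → w a < w (a+1)) : w = 1 := by
  obtain ⟨hw1, hw2⟩ := hw
  have hs0 : (0:ℤ) < s := by exact_mod_cast Nat.pos_of_ne_zero (by omega)
  have step1 : ∀ m : ℤ, w m < w (m + 1) := by
    intro m
    have hmod1 : (0:ℤ) ≤ m % s := Int.emod_nonneg m (by omega)
    have hmod2 : m % s < s := Int.emod_lt_of_pos m hs0
    have e1 : w m = w (m % s) + (m / s) * s := by
      have := perm_shift_mul s w hw1 (m / s) (m % s)
      rwa [Int.emod_add_ediv_mul m s] at this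
    have e2 : w (m + 1) = w (m % s + 1) + (m / s) * s := by
      have := perm_shift_mul s w hw1 (m / s) (m % s + 1)
      rw [show m % s + 1 + (m/s) * s = (m % s + (m/s)*s) + 1 by ring, Int.emod_add_ediv_mul m s] at this
      exact this
    have := h (m % s) hmod1 hmod2
    omega
  have step2 : ∀ (m : ℤ) (k : ℕ), w m + k ≤ w (m + k) := by
    intro m k
    induction k with
    | zero => simp
    | succ n ih =>
        have := step1 (m + n)
        push_cast
        push_cast at ih
        have h2 : w (m + n) + 1 ≤ w (m + n + 1) := this
        have h3 : m + (n + 1 : ℤ) = m + n + 1 := by ring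
        rw [h3]
        omega
  have step3 : ∀ m : ℤ, w (m + 1) = w m + 1 := by
    intro m
    have h1 := step2 (m + 1) (s - 1)
    have hcast : ((s - 1 : ℕ) : ℤ) = (s:ℤ) - 1 := by
      have : 1 ≤ s := by omega
      push_cast [this]
      ring
    rw [hcast] at h1
    rw [show m + 1 + ((s:ℤ) - 1) = m + s by ring, hw1] at h1
    have := step1 m
    omega
  have step4 : ∀ m : ℤ, w m = m + w 0 := by
    intro m
    induction m using Int.induction_on with
    | zero => simp
    | succ n ih => rw [step3 n, ih]; ring
    | pred n ih =>
        have := step3 (-(n:ℤ) - 1)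
        rw [show -(n:ℤ) - 1 + 1 = -(n:ℤ) by ring] at this
        omega
  have hw0 : w 0 = 0 := by
    have hsum : ∑ i ∈ Finset.range s, w (i:ℤ) = (∑ i ∈ Finset.range s, (i:ℤ)) + s * w 0 := by
      rw [Finset.sum_congr rfl (fun i (_ : i ∈ Finset.range s) => step4 (i:ℤ)), Finset.sum_add_distrib]
      simp [mul_comm]
    rw [hsum, gauss_sum] at hw2
    have : (s:ℤ) * w 0 = 0 := by omega
    rcases mul_eq_zero.mp this with h | h
    · omega
    · exact h
  ext x
  simp [step4 x, hw0]

lemma genFun_injective (s : ℕ) (hs : 2 ≤ s) (a : ℤ) : Function.Injective (genFun s a) :=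
  (genFun_involutive s hs a).injective

lemma invSet_decrease (s : ℕ) (hs : 2 ≤ s) (w : Equiv.Perm ℤ) (hw : w ∈ AffSymSet s)
    (a₀ : ℤ) (h0 : 0 ≤ a₀) (h1 : a₀ < s) (hd : w (a₀+1) < w a₀) :
    (InvSet s (w * genPerm s hs a₀)).ncard < (InvSet s w).ncard := by
  have hs0 : (0:ℤ) < s := by exact_mod_cast Nat.pos_of_ne_zero (by omega)
  set g : ℤ → ℤ := genFun s a₀ with hg
  have hginv : ∀ x, g (g x) = x := genFun_involutive s hs a₀
  have hginj : Function.Injective g := genFun_injective s hs a₀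
  have hgmul : ∀ (x k : ℤ), g (x + k * s) = g x + k * s := genFun_add_mul s a₀
  set v : Equiv.Perm ℤ := w * genPerm s hs a₀ with hv
  have hvapp : ∀ x, v x = w (g x) := fun x => rfl
  set φ : ℤ × ℤ → ℤ × ℤ := fun p =>
    if g p.1 < 0 then (g p.1 + s, g p.2 + s)
    else if (s:ℤ) ≤ g p.1 then (g p.1 - s, g p.2 - s)
    else (g p.1, g p.2) with hφ
  -- basic facts for p ∈ InvSet s v
  have horder : ∀ p : ℤ × ℤ, p ∈ InvSet s v → g p.1 < g p.2 := by
    rintro ⟨p1, p2⟩ ⟨hp1, hp2, hp3, hp4⟩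
    simp only at hp1 hp2 hp3 hp4 ⊢
    rw [hvapp, hvapp] at hp4
    by_contra hc
    push_neg at hc
    have hne : g p2 ≠ g p1 := fun h => by
      have := hginj h; omega
    have hlt : g p2 < g p1 := lt_of_le_of_ne hc hne
    have c1 : g p1 = p1 + 1 ∨ g p1 = p1 - 1 ∨ g p1 = p1 := genFun_cases s a₀ p1
    have c2 : g p2 = p2 + 1 ∨ g p2 = p2 - 1 ∨ g p2 = p2 := genFun_cases s a₀ p2
    have hp21 : p2 = p1 + 1 := by omega
    have hgp1 : g p1 = p1 + 1 := by omega
    have hgp2 : g p2 = p2 - 1 := by omega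
    have hdvd : (s:ℤ) ∣ (p1 - a₀) := genFun_add_one_imp s a₀ p1 hgp1
    have hpa : p1 = a₀ := int_eq_of_dvd_window s p1 a₀ hdvd hp1 hp2 h0 h1
    rw [hgp1, hgp2, hp21, hpa] at hp4
    simp at hp4
    omega
  have hkey : ∀ p : ℤ × ℤ, p ∈ InvSet s v →
      ¬ (g p.2 = g p.1 + 1 ∧ (s:ℤ) ∣ (g p.1 - a₀)) := by
    rintro ⟨p1, p2⟩ ⟨hp1, hp2, hp3, hp4⟩ ⟨he, hdvd⟩
    simp only at he hdvd hp3
    have h5 : g (g p1) = g p1 + 1 := genFun_eq_add_one s a₀ (g p1) hdvd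
    rw [hginv] at h5
    have hdvd2 : (s:ℤ) ∣ (g p2 - (a₀ + 1)) := by
      have he2 : g p2 - (a₀+1) = (g p1 - a₀) := by omega
      rw [he2]; exact hdvd
    have h6 : g (g p2) = g p2 - 1 := genFun_eq_sub_one s hs a₀ (g p2) hdvd2
    rw [hginv] at h6
    omega
  have hwin : ∀ p : ℤ × ℤ, p ∈ InvSet s v → -1 ≤ g p.1 ∧ g p.1 ≤ s := by
    rintro ⟨p1, p2⟩ ⟨hp1, hp2, _, _⟩
    have hcs : g p1 = p1 + 1 ∨ g p1 = p1 - 1 ∨ g p1 = p1 := genFun_cases s a₀ p1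
    simp only at hp1 hp2 ⊢
    omega
  have hφc : ∀ p : ℤ × ℤ, ∃ c : ℤ, φ p = (g p.1 + c, g p.2 + c) ∧ (s:ℤ) ∣ c ∧
      (c = 0 ∨ (g p.1 < 0 ∧ c = s) ∨ ((s:ℤ) ≤ g p.1 ∧ c = -s)) := by
    intro p
    simp only [hφ]
    split_ifs with hb1 hb2
    · exact ⟨s, rfl, dvd_refl _, Or.inr (Or.inl ⟨hb1, rfl⟩)⟩
    · exact ⟨-s, by simp [sub_eq_add_neg], (dvd_neg).mpr (dvd_refl _), Or.inr (Or.inr ⟨hb2, rfl⟩)⟩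
    · exact ⟨0, by simp, dvd_zero _, Or.inl rfl⟩
  have hw1 := hw.1
  -- maps into
  have hmaps : ∀ p ∈ InvSet s v, φ p ∈ InvSet s w \ {(a₀, a₀ + 1)} := by
    intro p hp
    obtain ⟨c, hc1, hc2, hc3⟩ := hφc p
    have hor := horder p hp
    have hwb := hwin p hp
    have hk := hkey p hp
    obtain ⟨hp1, hp2, hp3, hp4⟩ := hp
    have hp4' : w (g p.2) < w (g p.1) := by rw [← hvapp, ← hvapp]; exact hp4
    have hval : ∀ x : ℤ, w (x + c) = w x + c := by
      intro x
      rcases hc2 with ⟨k, hk2⟩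
      have := perm_shift_mul s w hw1 k x
      rw [hk2, mul_comm]; exact this
    have hwindow : 0 ≤ g p.1 + c ∧ g p.1 + c < s := by
      rcases hc3 with hcz | ⟨hb, hceq⟩ | ⟨hb, hceq⟩
      · subst hcz
        simp only [hφ] at hc1
        split_ifs at hc1 with hb1 hb2
        · have := congrArg Prod.fst hc1; simp only at this; omega
        · have := congrArg Prod.fst hc1; simp only at this; omega
        · push_neg at hb1 hb2; omega
      · subst hceq; omega
      · subst hceq; omega
    constructor
    · rw [hc1]
      refine ⟨hwindow.1, hwindow.2, ?_, ?_⟩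
      · show g p.1 + c < g p.2 + c
        omega
      · show w (g p.2 + c) < w (g p.1 + c)
        rw [hval, hval]
        omega
    · simp only [Set.mem_singleton_iff]
      intro hcon
      rw [hc1] at hcon
      have he1 : g p.1 + c = a₀ := by
        have := congrArg Prod.fst hcon; simpa using this
      have he2 : g p.2 + c = a₀ + 1 := by
        have := congrArg Prod.snd hcon; simpa using this
      apply hk
      constructor
      · omega
      · have he3 : g p.1 - a₀ = -c := by omega
        rw [he3]
        exact hc2.neg_right
  -- injectivity
  have hinj : Set.InjOn φ (InvSet s v) := by
    intro p hp q hq heq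
    obtain ⟨cp, hcp1, hcp2, _⟩ := hφc p
    obtain ⟨cq, hcq1, hcq2, _⟩ := hφc q
    rw [hcp1, hcq1] at heq
    have he1 : g p.1 + cp = g q.1 + cq := by
      have := congrArg Prod.fst heq; simpa using this
    have he2 : g p.2 + cp = g q.2 + cq := by
      have := congrArg Prod.snd heq; simpa using this
    obtain ⟨k, hk⟩ : (s:ℤ) ∣ (cq - cp) := hcq2.sub hcp2
    have hgk : g p.1 = g (q.1 + k * s) := by
      rw [hgmul, show k*(s:ℤ) = (s:ℤ)*k from mul_comm k s, ← hk]
      omega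
    have hpq1 : p.1 = q.1 + k * s := hginj hgk
    obtain ⟨hp1, hp2, _, _⟩ := hp
    obtain ⟨hq1, hq2, _, _⟩ := hq
    have hdvd : (s:ℤ) ∣ (p.1 - q.1) := ⟨k, by rw [hpq1]; ring⟩
    have heq1 : p.1 = q.1 := int_eq_of_dvd_window s p.1 q.1 hdvd hp1 hp2 hq1 hq2
    have hgg : g p.1 = g q.1 := by rw [heq1]
    have hcc : cp = cq := by omega
    have heq2 : p.2 = q.2 := hginj (by omega : g p.2 = g q.2)
    exact Prod.ext heq1 heq2
  -- conclude
  have hfinw : (InvSet s w).Finite := invSet_finite s hs w hw1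
  have hmem : (a₀, a₀+1) ∈ InvSet s w := ⟨h0, h1, by simp, hd⟩
  calc (InvSet s v).ncard = (φ '' InvSet s v).ncard := (Set.ncard_image_of_injOn hinj).symm
    _ ≤ (InvSet s w \ {(a₀, a₀+1)}).ncard := by
        apply Set.ncard_le_ncard
        · intro x hx
          obtain ⟨p, hp, hpx⟩ := hx
          rw [← hpx]
          exact hmaps p hp
        · exact hfinw.diff
    _ < (InvSet s w).ncard := Set.ncard_diff_singleton_lt_of_mem hmem hfinw

lemma step_lemma (s t : ℕ) (hs : 2 ≤ s) (hst : Nat.Coprime s t)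
    (a m i : ℤ) (hi : (s:ℤ) ∣ (i * t - (m + lc s t))) :
    ((s:ℤ) ∣ (genFun s a i * t - (levelGenFun s t (a+1) m + lc s t))) ∧
      levelGenFun s t (a+1) m - t * genFun s a i = m - t * i := by
  have hcop : IsCoprime (s:ℤ) (t:ℤ) := Nat.isCoprime_iff_coprime.mpr hst
  have hta : ∀ x : ℤ, ((s:ℤ) ∣ x * t) ↔ (s:ℤ) ∣ x := by
    intro x
    constructor
    · exact fun h => hcop.dvd_of_dvd_mul_right h
    · exact fun h => h.mul_right t
  have hE1 : ((s:ℤ) ∣ (m - ((a+1-1) * t - lc s t))) ↔ (s:ℤ) ∣ (i - a) := by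
    rw [show m - ((a+1-1) * t - lc s t) = (i - a) * t - (i * t - (m + lc s t)) by ring]
    constructor
    · intro h
      have := (h.add hi)
      rw [sub_add_cancel] at this
      exact (hta _).mp this
    · intro h
      exact ((hta _).mpr h).sub hi
  have hE2 : ((s:ℤ) ∣ (m - ((a+1) * t - lc s t))) ↔ (s:ℤ) ∣ (i - (a+1)) := by
    rw [show m - ((a+1) * t - lc s t) = (i - (a+1)) * t - (i * t - (m + lc s t)) by ring]
    constructor
    · intro h
      have := (h.add hi)
      rw [sub_add_cancel] at this
      exact (hta _).mp this
    · intro h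
      exact ((hta _).mpr h).sub hi
  have hnotboth : ¬ ((s:ℤ) ∣ (i - a) ∧ (s:ℤ) ∣ (i - (a+1))) := by
    rintro ⟨h1, h2⟩
    have := h1.sub h2
    rw [show i - a - (i - (a+1)) = 1 by ring] at this
    exact lt_aux_not_dvd_one s hs this
  by_cases hA : (s:ℤ) ∣ (i - a)
  · have hG : genFun s a i = i + 1 := genFun_eq_add_one s a i hA
    have hL : levelGenFun s t (a+1) m = m + t := by
      unfold levelGenFun
      rw [if_pos (hE1.mpr hA)]
    rw [hG, hL]
    constructor
    · rw [show (i+1) * (t:ℤ) - (m + t + lc s t) = i * t - (m + lc s t) by ring]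
      exact hi
    · ring
  · by_cases hB : (s:ℤ) ∣ (i - (a+1))
    · have hG : genFun s a i = i - 1 := genFun_eq_sub_one s hs a i hB
      have hL : levelGenFun s t (a+1) m = m - t := by
        unfold levelGenFun
        rw [if_neg (by rw [hE1]; exact hA), if_pos (hE2.mpr hB)]
      rw [hG, hL]
      constructor
      · rw [show (i-1) * (t:ℤ) - (m - t + lc s t) = i * t - (m + lc s t) by ring]
        exact hi
      · ring
    · have hG : genFun s a i = i := by
        unfold genFun
        rw [if_neg hA, if_neg (by rw [show i - a - 1 = i - (a+1) by ring]; exact hB)]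
      have hL : levelGenFun s t (a+1) m = m := by
        unfold levelGenFun
        rw [if_neg (by rw [hE1]; exact hA), if_neg (by rw [hE2]; exact hB)]
      rw [hG, hL]
      exact ⟨hi, by ring⟩

lemma genPerm_mul_self (s : ℕ) (hs : 2 ≤ s) (a : ℤ) :
    genPerm s hs a * genPerm s hs a = 1 := by
  ext x
  simp only [Equiv.Perm.mul_apply, Equiv.Perm.one_apply]
  exact genFun_involutive s hs a x

-- MORE AUX

/-- Explicit formula for the level `t` action: if `it ≡ m + c (mod s)` then
`ẘ(m) = m + t(w(i) - i)`. -/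
theorem levelT_formula (s t : ℕ) (hs : 2 ≤ s) (ht : 0 < t) (hst : Nat.Coprime s t)
    (Φ : Equiv.Perm ℤ → Equiv.Perm ℤ) (hΦ : IsLevelTAction s t hs Φ)
    (w : Equiv.Perm ℤ) (hw : w ∈ AffSymSet s) (m i : ℤ)
    (hi : (s : ℤ) ∣ (i * t - (m + lc s t))) :
    Φ w m = m + t * (w i - i) := by
  have hΦ1 : Φ 1 = 1 := by
    have h := hΦ.1 1 1 (one_mem_affSym s) (one_mem_affSym s)
    rw [mul_one] at h
    exact (left_eq_mul.mp h)
  suffices H : ∀ n : ℕ, ∀ w : Equiv.Perm ℤ, w ∈ AffSymSet s → (InvSet s w).ncard = n →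
      ∀ m i : ℤ, (s : ℤ) ∣ (i * t - (m + lc s t)) → Φ w m = m + t * (w i - i) by
    exact H _ w hw rfl m i hi
  clear hi m i hw w
  intro n
  induction n using Nat.strong_induction_on with
  | _ n IH =>
    intro w hw hn m i hi
    by_cases hdesc : ∃ a : ℤ, 0 ≤ a ∧ a < s ∧ w (a+1) < w a
    · obtain ⟨a₀, h0, h1, hd⟩ := hdesc
      set gp : Equiv.Perm ℤ := genPerm s hs a₀ with hgp
      set v : Equiv.Perm ℤ := w * gp with hv
      have hgmem : gp ∈ AffSymSet s := by
        have := mul_genPerm_mem s hs 1 (one_mem_affSym s) a₀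
        rwa [one_mul] at this
      have hvmem : v ∈ AffSymSet s := mul_genPerm_mem s hs w hw a₀
      have hww : w = v * gp := by
        rw [hv, mul_assoc, genPerm_mul_self s hs a₀, mul_one]
      have hlt : (InvSet s v).ncard < n := by
        rw [← hn]
        exact invSet_decrease s hs w hw a₀ h0 h1 hd
      have hg2 : Φ gp m = levelGenFun s t (a₀ + 1) m := by
        have h := hΦ.2 (a₀ + 1) m
        rw [show a₀ + 1 - 1 = a₀ by ring] at h
        exact h
      obtain ⟨hdvd', heq'⟩ := step_lemma s t hs hst a₀ m i hi
      have h3 := IH _ hlt v hvmem rfl (levelGenFun s t (a₀+1) m) (genFun s a₀ i) hdvd'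
      have h1' : Φ w m = Φ v (Φ gp m) := by
        rw [hww, hΦ.1 v gp hvmem hgmem]
        rfl
      have hvi : v (genFun s a₀ i) = w i := by
        rw [hv]
        show w (gp (genFun s a₀ i)) = w i
        congr 1
        exact genFun_involutive s hs a₀ i
      rw [h1', hg2, h3, hvi]
      linear_combination heq'
    · push_neg at hdesc
      have hd' : ∀ a : ℤ, 0 ≤ a → a < s → w a < w (a+1) := by
        intro a ha1 ha2
        have h := hdesc a ha1 ha2
        have hne : w a ≠ w (a+1) := by
          intro hcon
          have := w.injective hcon
          omega
        omega
      have hw1 : w = 1 := eq_one_of_no_descent s hs w hw hd'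
      subst hw1
      rw [hΦ1]
      simp
end

section
/- The level-t action of the affine symmetric group W̃_s on ℤ is faithful, and its image is exactly the set of x ∈ W̃_s such that x(m) ≡ m (mod t) for all m ∈ ℤ. -/
namespace LevelTAux


open Finset

lemma dvd_one_false {s : ℕ} (hs : 2 ≤ s) : ¬ ((s:ℤ) ∣ 1) := by
  intro h
  have := Int.le_of_dvd one_pos h
  omega

lemma dvd_cancel {s t : ℕ} {u : ℤ} (hu : (s:ℤ) ∣ ((t:ℤ) * u - 1)) (x : ℤ) :
    (s:ℤ) ∣ x ↔ (s:ℤ) ∣ (t:ℤ) * x := by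
  constructor
  · exact fun h => h.mul_left _
  · intro h
    have h2 : (s:ℤ) ∣ u * ((t:ℤ) * x) - ((t:ℤ) * u - 1) * x :=
      dvd_sub (h.mul_left u) (hu.mul_right x)
    rwa [show u * ((t:ℤ)*x) - ((t:ℤ)*u - 1)*x = x by ring] at h2

lemma nat_eq_of_dvd_sub {s : ℕ} (hs0 : 0 < s) {k l : ℕ} (hk : k < s) (hl : l < s)
    (h : (s:ℤ) ∣ ((k:ℤ) - l)) : k = l := by
  have h2 := Int.eq_zero_of_abs_lt_dvd h (by rw [abs_lt]; omega)
  omega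

lemma dvd_shift2 {s : ℕ} {X Y : ℤ} (h : X - Y = (s:ℤ)) : ((s:ℤ) ∣ X) ↔ ((s:ℤ) ∣ Y) := by
  constructor <;> rintro ⟨z, hz⟩
  · exact ⟨z - 1, by linarith⟩
  · exact ⟨z + 1, by linarith⟩

lemma per_int {s : ℕ} {w : ℤ → ℤ} (hw : ∀ m, w (m + s) = w m + s) :
    ∀ (m z : ℤ), w (m + s * z) = w m + s * z := by
  intro m z
  induction z using Int.induction_on with
  | zero => simp
  | succ i ih =>
      have h1 : m + (s:ℤ) * (i + 1) = (m + s * i) + s := by ring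
      rw [h1, hw, ih]; ring
  | pred i ih =>
      have h1 : m + (s:ℤ) * (-i - 1) + s = m + s * (-i) := by ring
      have h2 := hw (m + s * (-i - 1))
      rw [h1, ih] at h2
      have h3 : (s:ℤ) * (-(i:ℤ) - 1) = s * (-(i:ℤ)) - s := by ring
      linarith

lemma per_sub {s : ℕ} (hs0 : 0 < s) {w : ℤ → ℤ} (hw : ∀ m, w (m + s) = w m + s) (m : ℤ) :
    w m - m = w (m % s) - m % s := by
  have h1 := per_int hw (m % s) (m / s)
  have h2 : m % (s:ℤ) + (s:ℤ) * (m / s) = m := by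
    have := Int.mul_ediv_add_emod m s
    linarith
  rw [h2] at h1
  linarith

lemma reindex {s : ℕ} (hs0 : 0 < s) (G : ℤ → ℤ) (hG : ∀ m, G m = G (m % (s:ℤ)))
    (f : ℕ → ℤ) (hf : ∀ k < s, ∀ l < s, (s:ℤ) ∣ (f k - f l) → k = l) :
    ∑ k ∈ range s, G (f k) = ∑ i ∈ range s, G (i:ℤ) := by
  have hsz : (s:ℤ) ≠ 0 := by exact_mod_cast hs0.ne'
  have hsp : (0:ℤ) < s := by exact_mod_cast hs0
  have hmap : ∀ k ∈ range s, (f k % (s:ℤ)).toNat ∈ range s := by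
    intro k _
    have h1 := Int.emod_nonneg (f k) hsz
    have h2 := Int.emod_lt_of_pos (f k) hsp
    exact mem_range.mpr (by omega)
  have hinj : ∀ k ∈ range s, ∀ l ∈ range s,
      (f k % (s:ℤ)).toNat = (f l % (s:ℤ)).toNat → k = l := by
    intro k hk l hl h
    have h1 := Int.emod_nonneg (f k) hsz
    have h1' := Int.emod_nonneg (f l) hsz
    have he : f k % (s:ℤ) = f l % s := by omega
    have h0 : (f k - f l) % (s:ℤ) = 0 := by
      rw [Int.sub_emod, he]; simp
    exact hf k (mem_range.mp hk) l (mem_range.mp hl) (Int.dvd_of_emod_eq_zero h0)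
  refine Finset.sum_bij (fun k _ => (f k % (s:ℤ)).toNat) hmap
    (fun k hk l hl h => hinj k hk l hl h) ?_ ?_
  · intro b hb
    obtain ⟨a, ha, hba⟩ := Finset.surj_on_of_inj_on_of_card_le
      (fun k (_ : k ∈ range s) => (f k % (s:ℤ)).toNat) hmap
      (fun a₁ a₂ h₁ h₂ h => hinj a₁ h₁ a₂ h₂ h) le_rfl b hb
    exact ⟨a, ha, hba.symm⟩
  · intro k _
    rw [hG (f k), Int.toNat_of_nonneg (Int.emod_nonneg (f k) hsz)]

lemma sum_range_cast (s : ℕ) : ∑ i ∈ range s, (i:ℤ) = (s.choose 2 : ℤ) := by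
  have h1 := Finset.sum_range_id_mul_two s
  have h2 := Nat.choose_two_right s
  have h3 : ∑ i ∈ range s, i = s.choose 2 := by omega
  rw [← h3, Nat.cast_sum]

lemma ind_sum {s : ℕ} (hs0 : 0 < s) (r : ℤ) :
    ∑ i ∈ range s, (if (s:ℤ) ∣ ((i:ℤ) - r) then (1:ℤ) else 0) = 1 := by
  have hsz : (s:ℤ) ≠ 0 := by exact_mod_cast hs0.ne'
  have hsp : (0:ℤ) < s := by exact_mod_cast hs0
  have hb1 : (0:ℤ) ≤ r % s := Int.emod_nonneg r hsz
  have hb2 : r % (s:ℤ) < s := Int.emod_lt_of_pos r hsp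
  have hrr : (s:ℤ) ∣ (r - r % s) := ⟨r / s, by have := Int.mul_ediv_add_emod r s; linarith⟩
  have key : ∀ i ∈ range s,
      (if (s:ℤ) ∣ ((i:ℤ) - r) then (1:ℤ) else 0)
        = (if i = (r % (s:ℤ)).toNat then (1:ℤ) else 0) := by
    intro i hi
    have hi' := mem_range.mp hi
    by_cases h : (s:ℤ) ∣ ((i:ℤ) - r)
    · rw [if_pos h, if_pos]
      have h3 : (s:ℤ) ∣ ((i:ℤ) - r % s) := by
        have := dvd_add h hrr
        rwa [show (i:ℤ) - r + (r - r % s) = (i:ℤ) - r % s by ring] at this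
      have h4 := Int.eq_zero_of_abs_lt_dvd h3 (by rw [abs_lt]; omega)
      omega
    · rw [if_neg h, if_neg]
      intro he
      apply h
      have h5 : (i:ℤ) = r % s := by omega
      have h6 : (s:ℤ) ∣ ((i:ℤ) - r % s) := by rw [h5]; simp
      have := dvd_sub h6 hrr
      rwa [show (i:ℤ) - r % s - (r - r % s) = (i:ℤ) - r by ring] at this
  rw [Finset.sum_congr rfl key, Finset.sum_ite_eq' (range s) _ (fun _ => (1:ℤ)), if_pos]
  exact mem_range.mpr (by omega)

lemma genFun_eq {s : ℕ} (hs : 2 ≤ s) (a m : ℤ) :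
    genFun s a m = m + (if (s:ℤ) ∣ (m - a) then (1:ℤ) else 0)
      - (if (s:ℤ) ∣ (m - a - 1) then (1:ℤ) else 0) := by
  have hnb : ¬ ((s:ℤ) ∣ (m - a) ∧ (s:ℤ) ∣ (m - a - 1)) := by
    rintro ⟨h1, h2⟩
    have h3 := dvd_sub h1 h2
    rw [show m - a - (m - a - 1) = 1 by ring] at h3
    exact dvd_one_false hs h3
  unfold genFun
  by_cases h1 : (s:ℤ) ∣ (m - a)
  · have h2 : ¬ (s:ℤ) ∣ (m - a - 1) := fun h => hnb ⟨h1, h⟩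
    simp [h1, h2]
  · by_cases h2 : (s:ℤ) ∣ (m - a - 1) <;> simp [h1, h2]

lemma genFun_per {s : ℕ} (a m : ℤ) : genFun s a (m + s) = genFun s a m + s := by
  unfold genFun
  simp only [show ((s:ℤ) ∣ (m + s - a)) ↔ ((s:ℤ) ∣ (m - a)) from dvd_shift2 (by ring),
    show ((s:ℤ) ∣ (m + s - a - 1)) ↔ ((s:ℤ) ∣ (m - a - 1)) from dvd_shift2 (by ring)]
  by_cases h1 : (s:ℤ) ∣ (m - a) <;> by_cases h2 : (s:ℤ) ∣ (m - a - 1) <;>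
    simp [h1, h2] <;> ring


lemma mem_aff {s : ℕ} {x : Equiv.Perm ℤ} :
    x ∈ AffSymSet s ↔ (∀ m : ℤ, x (m + s) = x m + s) ∧
      (∑ i ∈ Finset.range s, x (i:ℤ)) = (s.choose 2 : ℤ) := Iff.rfl

lemma one_mem_aff {s : ℕ} : (1 : Equiv.Perm ℤ) ∈ AffSymSet s := by
  rw [mem_aff]
  refine ⟨fun m => rfl, ?_⟩
  simpa using sum_range_cast s

lemma mul_mem_aff {s : ℕ} (hs0 : 0 < s) {x y : Equiv.Perm ℤ}
    (hx : x ∈ AffSymSet s) (hy : y ∈ AffSymSet s) : x * y ∈ AffSymSet s := by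
  rw [mem_aff] at hx hy ⊢
  obtain ⟨hx1, hx2⟩ := hx
  obtain ⟨hy1, hy2⟩ := hy
  refine ⟨fun m => by simp [Equiv.Perm.mul_apply, hy1, hx1], ?_⟩
  have hinj : ∀ k < s, ∀ l < s, (s:ℤ) ∣ (y (k:ℤ) - y (l:ℤ)) → k = l := by
    intro k hk l hl hd
    obtain ⟨z, hz⟩ := hd
    have h1 : y ((l:ℤ) + s * z) = y (l:ℤ) + s * z := per_int hy1 _ _
    have h2 : y (k:ℤ) = y ((l:ℤ) + s * z) := by rw [h1]; linarith
    have h3 : (k:ℤ) = (l:ℤ) + s * z := y.injective h2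
    exact nat_eq_of_dvd_sub hs0 hk hl ⟨z, by linarith⟩
  have key : ∑ i ∈ Finset.range s, (x (y (i:ℤ)) - y (i:ℤ)) = 0 := by
    have hre := reindex hs0 (fun m => x m - m) (fun m => per_sub hs0 hx1 m)
      (fun k => y (k:ℤ)) hinj
    rw [hre, Finset.sum_sub_distrib, hx2, sum_range_cast]
    ring
  calc ∑ i ∈ Finset.range s, (x * y) (i:ℤ)
      = ∑ i ∈ Finset.range s, ((x (y (i:ℤ)) - y (i:ℤ)) + y (i:ℤ)) := by
        refine Finset.sum_congr rfl fun i _ => ?_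
        rw [Equiv.Perm.mul_apply]; ring
    _ = (s.choose 2 : ℤ) := by
        rw [Finset.sum_add_distrib, key, hy2, zero_add]

lemma gen_mem {s : ℕ} (hs : 2 ≤ s) (a : ℤ) : genPerm s hs a ∈ AffSymSet s := by
  have hs0 : 0 < s := by omega
  rw [mem_aff]
  simp only [genPerm, Function.Involutive.coe_toPerm]
  constructor
  · exact fun m => genFun_per a m
  · simp only [genFun_eq hs a]
    rw [Finset.sum_sub_distrib, Finset.sum_add_distrib, sum_range_cast, ind_sum hs0 a]
    simp only [sub_sub]
    rw [ind_sum hs0 (a + 1)]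
    ring

lemma level_nb {s t : ℕ} (hs : 2 ≤ s) (hst : Nat.Coprime s t) (i m : ℤ) :
    ¬ ((s:ℤ) ∣ (m - ((i-1) * t - lc s t)) ∧ (s:ℤ) ∣ (m - (i * t - lc s t))) := by
  rintro ⟨h1, h2⟩
  have h3 := dvd_sub h1 h2
  rw [show (m - ((i-1) * (t:ℤ) - lc s t)) - (m - (i * t - lc s t)) = (t:ℤ) by ring] at h3
  have h4 : s ∣ t := by exact_mod_cast h3
  have h6 : s ∣ 1 := hst ▸ Nat.dvd_gcd dvd_rfl h4
  have := Nat.le_of_dvd one_pos h6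
  omega

lemma levelGenFun_eq {s t : ℕ} (hs : 2 ≤ s) (hst : Nat.Coprime s t) (i m : ℤ) :
    levelGenFun s t i m
      = m + (t:ℤ) * (if (s:ℤ) ∣ (m - ((i-1) * t - lc s t)) then (1:ℤ) else 0)
          - (t:ℤ) * (if (s:ℤ) ∣ (m - (i * t - lc s t)) then (1:ℤ) else 0) := by
  have hnb := level_nb hs hst i m
  unfold levelGenFun
  by_cases h1 : (s:ℤ) ∣ (m - ((i-1) * t - lc s t))
  · have h2 : ¬ (s:ℤ) ∣ (m - (i * t - lc s t)) := fun h => hnb ⟨h1, h⟩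
    simp [h1, h2]
  · by_cases h2 : (s:ℤ) ∣ (m - (i * t - lc s t)) <;> simp [h1, h2]

lemma levelGenFun_per {s t : ℕ} (i m : ℤ) :
    levelGenFun s t i (m + s) = levelGenFun s t i m + s := by
  unfold levelGenFun
  simp only [show ((s:ℤ) ∣ (m + s - ((i-1) * t - lc s t))) ↔
      ((s:ℤ) ∣ (m - ((i-1) * t - lc s t))) from dvd_shift2 (by ring),
    show ((s:ℤ) ∣ (m + s - (i * t - lc s t))) ↔
      ((s:ℤ) ∣ (m - (i * t - lc s t))) from dvd_shift2 (by ring)]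
  by_cases h1 : (s:ℤ) ∣ (m - ((i-1) * t - lc s t)) <;>
    by_cases h2 : (s:ℤ) ∣ (m - (i * t - lc s t)) <;> simp [h1, h2] <;> ring

lemma levelGenFun_sum {s t : ℕ} (hs : 2 ≤ s) (hst : Nat.Coprime s t) (i : ℤ) :
    ∑ j ∈ Finset.range s, levelGenFun s t i (j:ℤ) = (s.choose 2 : ℤ) := by
  have hs0 : 0 < s := by omega
  simp only [levelGenFun_eq hs hst i]
  rw [Finset.sum_sub_distrib, Finset.sum_add_distrib, sum_range_cast,
    ← Finset.mul_sum, ← Finset.mul_sum, ind_sum hs0 ((i-1) * t - lc s t),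
    ind_sum hs0 (i * t - lc s t)]
  ring

/-- `ee s t u d` is the shift `u*(c+d)` used at level `t` on the class `d mod t`. -/
def ee (s t : ℕ) (u d : ℤ) : ℤ := u * (lc s t + d)

/-- The level-`t` rescaling of a function on `ℤ`. -/
def PsiFun (s t : ℕ) (u : ℤ) (w : ℤ → ℤ) (m : ℤ) : ℤ :=
  (t:ℤ) * (w (m / t + ee s t u (m % t)) - ee s t u (m % t)) + m % t

lemma psiFun_eval {s t : ℕ} (ht : 0 < t) (u : ℤ) (w : ℤ → ℤ) (n d : ℤ)
    (h0 : 0 ≤ d) (h1 : d < t) :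
    PsiFun s t u w ((t:ℤ) * n + d) = (t:ℤ) * (w (n + ee s t u d) - ee s t u d) + d := by
  have ht' : (t:ℤ) ≠ 0 := by exact_mod_cast ht.ne'
  have hdiv : ((t:ℤ) * n + d) / t = n := by
    rw [show (t:ℤ) * n + d = d + n * t by ring, Int.add_mul_ediv_right _ _ ht',
      Int.ediv_eq_zero_of_lt h0 h1, zero_add]
  have hmod : ((t:ℤ) * n + d) % t = d := by
    rw [show (t:ℤ) * n + d = d + n * t by ring, Int.add_mul_emod_self_right, Int.emod_eq_of_lt h0 h1]
  unfold PsiFun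
  rw [hdiv, hmod]

lemma psiFun_comp {s t : ℕ} (ht : 0 < t) (u : ℤ) (w v : ℤ → ℤ) (m : ℤ) :
    PsiFun s t u w (PsiFun s t u v m) = PsiFun s t u (fun x => w (v x)) m := by
  have ht' : (t:ℤ) ≠ 0 := by exact_mod_cast ht.ne'
  have h0 : 0 ≤ m % (t:ℤ) := Int.emod_nonneg m ht'
  have h1 : m % (t:ℤ) < t := Int.emod_lt_of_pos m (by exact_mod_cast ht)
  have hv : PsiFun s t u v m
      = (t:ℤ) * (v (m / t + ee s t u (m % t)) - ee s t u (m % t)) + m % t := rfl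
  rw [hv, psiFun_eval ht u w _ _ h0 h1]
  have harg : v (m / (t:ℤ) + ee s t u (m % t)) - ee s t u (m % t) + ee s t u (m % t)
      = v (m / (t:ℤ) + ee s t u (m % t)) := by ring
  rw [harg]
  rfl

lemma psiFun_id {s t : ℕ} (ht : 0 < t) (u m : ℤ) : PsiFun s t u id m = m := by
  unfold PsiFun
  have h : m / (t:ℤ) + ee s t u (m % t) - ee s t u (m % t) = m / t := by ring
  rw [id_eq, h]
  exact Int.mul_ediv_add_emod m t

/-- The level-`t` rescaling as a permutation. -/
def PsiPerm (s t : ℕ) (ht : 0 < t) (u : ℤ) (w : Equiv.Perm ℤ) : Equiv.Perm ℤ where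
  toFun := PsiFun s t u w
  invFun := PsiFun s t u w.symm
  left_inv := by
    intro m
    rw [psiFun_comp ht]
    have : (fun x => w.symm (w x)) = (id : ℤ → ℤ) := funext fun x => w.symm_apply_apply x
    rw [this, psiFun_id ht]
  right_inv := by
    intro m
    rw [psiFun_comp ht]
    have : (fun x => w (w.symm x)) = (id : ℤ → ℤ) := funext fun x => w.apply_symm_apply x
    rw [this, psiFun_id ht]

lemma psiPerm_apply {s t : ℕ} (ht : 0 < t) (u : ℤ) (w : Equiv.Perm ℤ) (m : ℤ) :
    PsiPerm s t ht u w m = PsiFun s t u w m := rfl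

lemma psiPerm_one {s t : ℕ} (ht : 0 < t) (u : ℤ) :
    PsiPerm s t ht u 1 = 1 := by
  ext m
  rw [psiPerm_apply]
  have : (⇑(1 : Equiv.Perm ℤ)) = (id : ℤ → ℤ) := rfl
  rw [this, psiFun_id ht]
  rfl

lemma psiPerm_mul {s t : ℕ} (ht : 0 < t) (u : ℤ) (w v : Equiv.Perm ℤ) :
    PsiPerm s t ht u (w * v) = PsiPerm s t ht u w * PsiPerm s t ht u v := by
  ext m
  rw [Equiv.Perm.mul_apply, psiPerm_apply, psiPerm_apply, psiPerm_apply,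
    psiFun_comp ht]
  rfl

lemma psi_gen {s t : ℕ} (hs : 2 ≤ s) (ht : 0 < t) {u : ℤ}
    (hu : (s:ℤ) ∣ ((t:ℤ) * u - 1)) (i m : ℤ) :
    PsiFun s t u (genFun s (i - 1)) m = levelGenFun s t i m := by
  have ht' : (t:ℤ) ≠ 0 := by exact_mod_cast ht.ne'
  have hm := Int.mul_ediv_add_emod m t
  set c := lc s t with hc
  set d := m % (t:ℤ) with hd
  set E := ee s t u d with hE
  set K := m / (t:ℤ) + E with hK
  have hEe : E = u * (c + d) := rfl
  have hdiff1 : (t:ℤ) * (K - (i - 1)) - (m - ((i-1) * t - c)) = ((t:ℤ) * u - 1) * (c + d) := by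
    rw [hK, hEe]
    linear_combination hm
  have hdiff2 : (t:ℤ) * (K - (i - 1) - 1) - (m - (i * t - c)) = ((t:ℤ) * u - 1) * (c + d) := by
    rw [hK, hEe]
    linear_combination hm
  have hiff1 : ((s:ℤ) ∣ (K - (i - 1))) ↔ ((s:ℤ) ∣ (m - ((i-1) * t - c))) := by
    rw [dvd_cancel hu]
    constructor <;> intro h
    · have h2 := dvd_sub h (hu.mul_right (c + d))
      rwa [show (t:ℤ) * (K - (i - 1)) - ((t:ℤ) * u - 1) * (c + d)
        = m - ((i-1) * t - c) by linarith] at h2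
    · have h2 := dvd_add h (hu.mul_right (c + d))
      rwa [show m - ((i-1) * t - c) + ((t:ℤ) * u - 1) * (c + d)
        = (t:ℤ) * (K - (i - 1)) by linarith] at h2
  have hiff2 : ((s:ℤ) ∣ (K - (i - 1) - 1)) ↔ ((s:ℤ) ∣ (m - (i * t - c))) := by
    rw [dvd_cancel hu]
    constructor <;> intro h
    · have h2 := dvd_sub h (hu.mul_right (c + d))
      rwa [show (t:ℤ) * (K - (i - 1) - 1) - ((t:ℤ) * u - 1) * (c + d)
        = m - (i * t - c) by linarith] at h2
    · have h2 := dvd_add h (hu.mul_right (c + d))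
      rwa [show m - (i * t - c) + ((t:ℤ) * u - 1) * (c + d)
        = (t:ℤ) * (K - (i - 1) - 1) by linarith] at h2
  have hpsi : PsiFun s t u (genFun s (i - 1)) m
      = (t:ℤ) * (genFun s (i - 1) K - E) + d := rfl
  rw [hpsi]
  unfold genFun levelGenFun
  rw [← hc]
  by_cases h1 : (s:ℤ) ∣ (K - (i - 1))
  · rw [if_pos h1, if_pos (hiff1.mp h1)]
    rw [hK]
    linear_combination hm
  · rw [if_neg h1, if_neg (fun h => h1 (hiff1.mpr h))]
    by_cases h2 : (s:ℤ) ∣ (K - (i - 1) - 1)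
    · rw [if_pos h2, if_pos (hiff2.mp h2)]
      rw [hK]
      linear_combination hm
    · rw [if_neg h2, if_neg (fun h => h2 (hiff2.mpr h))]
      rw [hK]
      linear_combination hm

lemma psiPerm_gen_mem {s t : ℕ} (hs : 2 ≤ s) (ht : 0 < t) (hst : Nat.Coprime s t)
    {u : ℤ} (hu : (s:ℤ) ∣ ((t:ℤ) * u - 1)) (k : ℤ) :
    PsiPerm s t ht u (genPerm s hs k) ∈ AffSymSet s := by
  have hco : ∀ m : ℤ, PsiPerm s t ht u (genPerm s hs k) m = levelGenFun s t (k + 1) m := by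
    intro m
    rw [psiPerm_apply]
    have hg : (⇑(genPerm s hs k)) = genFun s k := Function.Involutive.coe_toPerm _
    rw [hg, show genFun s k = genFun s ((k + 1) - 1) from by norm_num]
    exact psi_gen hs ht hu (k + 1) m
  rw [mem_aff]
  constructor
  · intro m
    rw [hco, hco, levelGenFun_per]
  · simp only [hco]
    exact levelGenFun_sum hs hst (k + 1)

/-- Quadratic displacement measure on a fundamental domain. -/
def mu (s : ℕ) (w : ℤ → ℤ) : ℤ := ∑ i ∈ Finset.range s, (w (i:ℤ) - i) ^ 2

lemma mu_nonneg {s : ℕ} (w : ℤ → ℤ) : 0 ≤ mu s w :=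
  Finset.sum_nonneg fun i _ => sq_nonneg _

lemma mu_reindex {s : ℕ} (hs0 : 0 < s) {w : ℤ → ℤ} (hw : ∀ m, w (m + s) = w m + s) (k : ℤ) :
    mu s w = ∑ i ∈ Finset.range s, (w (k + (i:ℤ)) - (k + (i:ℤ))) ^ 2 := by
  symm
  refine reindex hs0 (fun m => (w m - m) ^ 2)
    (fun m => by show (w m - m) ^ 2 = (w (m % (s:ℤ)) - m % s) ^ 2; rw [per_sub hs0 hw m]) _ ?_
  intro a ha b hb hd
  refine nat_eq_of_dvd_sub hs0 ha hb ?_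
  obtain ⟨z, hz⟩ := hd
  exact ⟨z, by linarith⟩

lemma mu_dec {s : ℕ} (hs : 2 ≤ s) {w : Equiv.Perm ℤ} (hw : ∀ m : ℤ, w (m + s) = w m + s)
    (k : ℤ) (hk : w (k + 1) < w k) :
    mu s (fun m => w (genFun s k m)) < mu s (⇑w) := by
  have hs0 : 0 < s := by omega
  have h1s : 1 < s := by omega
  have hw' : ∀ m : ℤ, w (genFun s k (m + s)) = w (genFun s k m) + s := by
    intro m
    rw [genFun_per, hw]
  rw [mu_reindex hs0 hw k, mu_reindex hs0 hw' k]
  rw [Finset.range_eq_Ico, Finset.sum_eq_sum_Ico_succ_bot hs0,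
    Finset.sum_eq_sum_Ico_succ_bot h1s, Finset.sum_eq_sum_Ico_succ_bot hs0,
    Finset.sum_eq_sum_Ico_succ_bot h1s]
  have htail : ∑ i ∈ Finset.Ico 2 s, (w (genFun s k (k + (i:ℤ))) - (k + (i:ℤ))) ^ 2
      = ∑ i ∈ Finset.Ico 2 s, (w (k + (i:ℤ)) - (k + (i:ℤ))) ^ 2 := by
    refine Finset.sum_congr rfl fun i hi => ?_
    obtain ⟨hi2, his⟩ := Finset.mem_Ico.mp hi
    have hfix : genFun s k (k + (i:ℤ)) = k + (i:ℤ) := by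
      unfold genFun
      rw [if_neg, if_neg]
      · intro h
        rw [show k + (i:ℤ) - k - 1 = (i:ℤ) - 1 by ring] at h
        have := Int.le_of_dvd (by omega) h
        omega
      · intro h
        rw [show k + (i:ℤ) - k = (i:ℤ) by ring] at h
        have := Int.le_of_dvd (by omega) h
        omega
    rw [hfix]
  have he0 : genFun s k (k + ((0:ℕ):ℤ)) = k + 1 := by
    unfold genFun
    rw [if_pos ⟨0, by push_cast; ring⟩]
    push_cast; ring
  have he1 : genFun s k (k + ((1:ℕ):ℤ)) = k := by
    unfold genFun
    rw [if_neg, if_pos ⟨0, by push_cast; ring⟩]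
    · push_cast; ring
    · intro h
      rw [show k + ((1:ℕ):ℤ) - k = 1 by push_cast; ring] at h
      exact dvd_one_false hs h
  rw [htail, he0, he1]
  have hb : w (k + ((1:ℕ):ℤ)) = w (k + 1) := by norm_num
  have hb0 : w (k + ((0:ℕ):ℤ)) = w k := by norm_num
  rw [hb, hb0]
  push_cast
  nlinarith [hk]

lemma mu_toNat_dec {s : ℕ} (hs : 2 ≤ s) {w : Equiv.Perm ℤ} (hw : ∀ m : ℤ, w (m + s) = w m + s)
    (k : ℤ) (hk : w (k + 1) < w k) :
    (mu s (⇑(w * genPerm s hs k))).toNat < (mu s (⇑w)).toNat := by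
  have hcoe : ⇑(w * genPerm s hs k) = fun m => w (genFun s k m) := by
    funext m
    rw [Equiv.Perm.mul_apply,
      show (⇑(genPerm s hs k)) = genFun s k from Function.Involutive.coe_toPerm _]
  rw [hcoe]
  have hlt := mu_dec hs hw k hk
  have hnn := mu_nonneg (s := s) (fun m => w (genFun s k m))
  omega

lemma descent_exists {s : ℕ} (hs : 2 ≤ s) {w : Equiv.Perm ℤ}
    (hmem : w ∈ AffSymSet s) (hne : w ≠ 1) : ∃ k : ℤ, w (k + 1) < w k := by
  by_contra hcon
  push_neg at hcon
  have hlt : ∀ k : ℤ, w k < w (k + 1) := by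
    intro k
    refine lt_of_le_of_ne (hcon k) fun he => ?_
    have := w.injective he
    omega
  have hsm : StrictMono (⇑w) := strictMono_int_of_lt_succ hlt
  have hstep : ∀ m : ℤ, w (m + 1) = w m + 1 := by
    intro m
    by_contra hne2
    have h2 : w m + 2 ≤ w (m + 1) := by have := hlt m; omega
    obtain ⟨j, hj⟩ := w.surjective (w m + 1)
    rcases le_or_gt j m with hc | hc
    · have := hsm.le_iff_le.mpr hc
      omega
    · have hc' : m + 1 ≤ j := hc
      have := hsm.le_iff_le.mpr hc'
      omega
  have hlin : ∀ m : ℤ, w m = w 0 + m := by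
    intro m
    induction m using Int.induction_on with
    | zero => simp
    | succ i ih => rw [hstep, ih]; ring
    | pred i ih =>
        have := hstep (-(i:ℤ) - 1)
        rw [show -(i:ℤ) - 1 + 1 = -(i:ℤ) by ring] at this
        rw [ih] at this
        omega
  have hsum := (mem_aff.mp hmem).2
  have hsum2 : ∑ i ∈ Finset.range s, (w 0 + (i:ℤ)) = (s.choose 2 : ℤ) := by
    rw [← hsum]
    exact Finset.sum_congr rfl fun i _ => (hlin (i:ℤ)).symm
  rw [Finset.sum_add_distrib, Finset.sum_const, sum_range_cast, Finset.card_range] at hsum2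
  have hw0 : w 0 = 0 := by
    have hns : s • w 0 = (s:ℤ) * w 0 := nsmul_eq_mul _ _
    rw [hns] at hsum2
    have hz : (s:ℤ) * w 0 = 0 := by linarith
    have hsne : (s:ℤ) ≠ 0 := by exact_mod_cast (by omega : s ≠ 0)
    exact (mul_eq_zero.mp hz).resolve_left hsne
  apply hne
  ext m
  rw [hlin m, hw0]
  simp

lemma mu_pos_or {s : ℕ} : True := trivial

lemma main_aux (s t : ℕ) (hs : 2 ≤ s) (ht : 0 < t) (hst : Nat.Coprime s t)
    (u : ℤ) (hu : (s:ℤ) ∣ ((t:ℤ) * u - 1))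
    (Φ : Equiv.Perm ℤ → Equiv.Perm ℤ) (hΦ : IsLevelTAction s t hs Φ) :
    ∀ w : Equiv.Perm ℤ, w ∈ AffSymSet s →
      Φ w = PsiPerm s t ht u w ∧ PsiPerm s t ht u w ∈ AffSymSet s := by
  have hs0 : 0 < s := by omega
  obtain ⟨hΦ1, hΦ2⟩ := hΦ
  have hone : Φ 1 = 1 := by
    have h := hΦ1 1 1 one_mem_aff one_mem_aff
    rw [mul_one] at h
    have := mul_left_cancel (a := Φ 1) (b := (1 : Equiv.Perm ℤ)) (c := Φ 1)
      (by rw [mul_one, ← h])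
    exact this.symm
  have hgen : ∀ k : ℤ, Φ (genPerm s hs k) = PsiPerm s t ht u (genPerm s hs k) := by
    intro k
    ext m
    have h2 := hΦ2 (k + 1) m
    rw [show (k:ℤ) + 1 - 1 = k by ring] at h2
    rw [h2, psiPerm_apply]
    have hg : (⇑(genPerm s hs k)) = genFun s k := Function.Involutive.coe_toPerm _
    rw [hg, show genFun s k = genFun s ((k + 1) - 1) from by norm_num]
    exact (psi_gen hs ht hu (k + 1) m).symm
  suffices H : ∀ n : ℕ, ∀ w : Equiv.Perm ℤ, w ∈ AffSymSet s → (mu s (⇑w)).toNat < n →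
      Φ w = PsiPerm s t ht u w ∧ PsiPerm s t ht u w ∈ AffSymSet s by
    intro w hw
    exact H ((mu s (⇑w)).toNat + 1) w hw (Nat.lt_succ_self _)
  intro n
  induction n with
  | zero => intro w _ h; omega
  | succ n ih =>
      intro w hw hn
      by_cases hne : w = 1
      · subst hne
        exact ⟨by rw [hone, psiPerm_one], by rw [psiPerm_one]; exact one_mem_aff⟩
      · obtain ⟨k, hk⟩ := descent_exists hs hw hne
        set g := genPerm s hs k with hg
        have hgm : g ∈ AffSymSet s := gen_mem hs k
        have hwg : w * g ∈ AffSymSet s := mul_mem_aff hs0 hw hgm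
        have hmu : (mu s (⇑(w * g))).toNat < (mu s (⇑w)).toNat :=
          mu_toNat_dec hs (mem_aff.mp hw).1 k hk
        obtain ⟨ihΦ, ihA⟩ := ih (w * g) hwg (by omega)
        have hgg : g * g = 1 := by
          ext m
          rw [Equiv.Perm.mul_apply]
          have hgc : (⇑(genPerm s hs k)) = genFun s k := Function.Involutive.coe_toPerm _
          rw [hg]
          show genPerm s hs k (genPerm s hs k m) = (1 : Equiv.Perm ℤ) m
          rw [show ((1 : Equiv.Perm ℤ) m) = m from rfl]
          have := genFun_involutive s hs k m
          calc genPerm s hs k (genPerm s hs k m)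
              = genFun s k (genFun s k m) := by rw [hgc]
            _ = m := genFun_involutive s hs k m
        have hw2 : (w * g) * g = w := by rw [mul_assoc, hgg, mul_one]
        constructor
        · calc Φ w = Φ ((w * g) * g) := by rw [hw2]
            _ = Φ (w * g) * Φ g := hΦ1 _ _ hwg hgm
            _ = PsiPerm s t ht u (w * g) * PsiPerm s t ht u g := by rw [ihΦ, hg, hgen k]
            _ = PsiPerm s t ht u ((w * g) * g) := (psiPerm_mul ht u _ _).symm
            _ = PsiPerm s t ht u w := by rw [hw2]
        · rw [← hw2, psiPerm_mul]
          exact mul_mem_aff hs0 ihA (psiPerm_gen_mem hs ht hst hu k)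

end LevelTAux

open LevelTAux

/-- The level `t` action of `W̃_s` on `ℤ` is faithful, and its image is
`{x ∈ W̃_s : x(m) ≡ m (mod t) for all m}`. -/
theorem levelT_faithful_image (s t : ℕ) (hs : 2 ≤ s) (ht : 0 < t) (hst : Nat.Coprime s t)
    (Φ : Equiv.Perm ℤ → Equiv.Perm ℤ) (hΦ : IsLevelTAction s t hs Φ) :
    Set.InjOn Φ (AffSymSet s) ∧
      Φ '' AffSymSet s = {x : Equiv.Perm ℤ | x ∈ AffSymSet s ∧ ∀ m : ℤ, (t : ℤ) ∣ (x m - m)} := by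
  classical
  have hs0 : 0 < s := by omega
  obtain ⟨a, b, hab⟩ := Nat.isCoprime_iff_coprime.mpr hst
  have hu : (s:ℤ) ∣ ((t:ℤ) * b - 1) := ⟨-a, by linear_combination hab⟩
  have hv : (t:ℤ) ∣ ((s:ℤ) * a - 1) := ⟨-b, by linear_combination hab⟩
  have main := main_aux s t hs ht hst b hu Φ hΦ
  have ht' : (t:ℤ) ≠ 0 := by exact_mod_cast ht.ne'
  have htz : (0:ℤ) < t := by exact_mod_cast ht
  constructor
  · intro w hw v' hv' heq
    have h1 := (main w hw).1
    have h2 := (main v' hv').1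
    rw [h1, h2] at heq
    have hptw : ∀ n : ℤ, w (n + ee s t b 0) = v' (n + ee s t b 0) := by
      intro n
      have hm := Equiv.ext_iff.mp heq ((t:ℤ) * n + 0)
      rw [psiPerm_apply, psiPerm_apply, psiFun_eval ht b (⇑w) n 0 le_rfl htz,
        psiFun_eval ht b (⇑v') n 0 le_rfl htz] at hm
      have hmc : (t:ℤ) * (w (n + ee s t b 0) - ee s t b 0)
          = (t:ℤ) * (v' (n + ee s t b 0) - ee s t b 0) := by linarith
      have := mul_left_cancel₀ ht' hmc
      linarith
    ext m
    have := hptw (m - ee s t b 0)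
    rwa [show m - ee s t b 0 + ee s t b 0 = m by ring] at this
  · ext x
    simp only [Set.mem_image, Set.mem_setOf_eq]
    constructor
    · rintro ⟨w, hw, rfl⟩
      obtain ⟨h1, h2⟩ := main w hw
      rw [h1]
      refine ⟨h2, fun m => ?_⟩
      rw [psiPerm_apply]
      have hm := Int.mul_ediv_add_emod m t
      exact ⟨w (m / t + ee s t b (m % t)) - ee s t b (m % t) - m / t, by
        unfold PsiFun
        linear_combination hm⟩
    · rintro ⟨hxA, hxt⟩
      obtain ⟨hxper, hxsum⟩ := mem_aff.mp hxA
      have hdvd : ∀ z : ℤ, (t:ℤ) ∣ x ((t:ℤ) * z) := by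
        intro z
        have h := hxt ((t:ℤ) * z)
        have h2 := dvd_add h ⟨z, rfl⟩
        rwa [show x ((t:ℤ)*z) - (t:ℤ)*z + (t:ℤ)*z = x ((t:ℤ)*z) by ring] at h2
      have hxts : ∀ m : ℤ, (t:ℤ) ∣ (x.symm m - m) := by
        intro m
        have h := hxt (x.symm m)
        rw [Equiv.apply_symm_apply] at h
        exact dvd_sub_comm.mp h
      have hdvds : ∀ z : ℤ, (t:ℤ) ∣ x.symm ((t:ℤ) * z) := by
        intro z
        have h := hxts ((t:ℤ) * z)
        have h2 := dvd_add h ⟨z, rfl⟩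
        rwa [show x.symm ((t:ℤ)*z) - (t:ℤ)*z + (t:ℤ)*z = x.symm ((t:ℤ)*z) by ring] at h2
      set wf : ℤ → ℤ := fun k => x ((t:ℤ) * (k - ee s t b 0)) / t + ee s t b 0 with hwf
      set wg : ℤ → ℤ := fun k => x.symm ((t:ℤ) * (k - ee s t b 0)) / t + ee s t b 0 with hwg
      have hwfe : ∀ k, (t:ℤ) * (wf k - ee s t b 0) = x ((t:ℤ) * (k - ee s t b 0)) := by
        intro k
        show (t:ℤ) * (x ((t:ℤ) * (k - ee s t b 0)) / t + ee s t b 0 - ee s t b 0)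
          = x ((t:ℤ) * (k - ee s t b 0))
        rw [show x ((t:ℤ) * (k - ee s t b 0)) / t + ee s t b 0 - ee s t b 0
          = x ((t:ℤ) * (k - ee s t b 0)) / t by ring]
        exact Int.mul_ediv_cancel' (hdvd _)
      have hwge : ∀ k, (t:ℤ) * (wg k - ee s t b 0) = x.symm ((t:ℤ) * (k - ee s t b 0)) := by
        intro k
        show (t:ℤ) * (x.symm ((t:ℤ) * (k - ee s t b 0)) / t + ee s t b 0 - ee s t b 0)
          = x.symm ((t:ℤ) * (k - ee s t b 0))
        rw [show x.symm ((t:ℤ) * (k - ee s t b 0)) / t + ee s t b 0 - ee s t b 0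
          = x.symm ((t:ℤ) * (k - ee s t b 0)) / t by ring]
        exact Int.mul_ediv_cancel' (hdvds _)
      have hlv : ∀ k, wg (wf k) = k := by
        intro k
        show x.symm ((t:ℤ) * (wf k - ee s t b 0)) / t + ee s t b 0 = k
        rw [hwfe k, Equiv.symm_apply_apply, Int.mul_ediv_cancel_left _ ht']
        ring
      have hrv : ∀ k, wf (wg k) = k := by
        intro k
        show x ((t:ℤ) * (wg k - ee s t b 0)) / t + ee s t b 0 = k
        rw [hwge k, Equiv.apply_symm_apply, Int.mul_ediv_cancel_left _ ht']
        ring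
      set w : Equiv.Perm ℤ := ⟨wf, wg, hlv, hrv⟩ with hwdef
      have hwper : ∀ m : ℤ, wf (m + s) = wf m + s := by
        intro m
        show x ((t:ℤ) * (m + s - ee s t b 0)) / t + ee s t b 0
          = x ((t:ℤ) * (m - ee s t b 0)) / t + ee s t b 0 + s
        rw [show (t:ℤ) * (m + s - ee s t b 0) = (t:ℤ) * (m - ee s t b 0) + (s:ℤ) * (t:ℤ) by ring,
          per_int hxper _ ((t:ℤ)), Int.add_mul_ediv_right _ _ ht']
        ring
      have hinj2 : ∀ k < s, ∀ l < s,
          (s:ℤ) ∣ ((t:ℤ) * ((k:ℤ) - ee s t b 0) - (t:ℤ) * ((l:ℤ) - ee s t b 0)) → k = l := by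
        intro k hk l hl hd
        rw [show (t:ℤ) * ((k:ℤ) - ee s t b 0) - (t:ℤ) * ((l:ℤ) - ee s t b 0)
          = (t:ℤ) * ((k:ℤ) - l) by ring] at hd
        exact nat_eq_of_dvd_sub hs0 hk hl ((dvd_cancel hu _).mpr hd)
      have hwsum : ∑ i ∈ Finset.range s, wf (i:ℤ) = (s.choose 2 : ℤ) := by
        have hre := reindex hs0 (fun m => x m - m)
          (fun m => by show x m - m = x (m % (s:ℤ)) - m % s; exact per_sub hs0 hxper m)
          (fun k => (t:ℤ) * ((k:ℤ) - ee s t b 0)) hinj2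
        have hterm : ∀ k : ℕ, x ((t:ℤ) * ((k:ℤ) - ee s t b 0)) - (t:ℤ) * ((k:ℤ) - ee s t b 0)
            = (t:ℤ) * (wf (k:ℤ) - (k:ℤ)) := by
          intro k
          rw [← hwfe (k:ℤ)]
          ring
        simp only [hterm] at hre
        rw [Finset.sum_sub_distrib, hxsum, sum_range_cast, ← Finset.mul_sum] at hre
        have hmul : (t:ℤ) * ∑ k ∈ Finset.range s, (wf (k:ℤ) - (k:ℤ)) = 0 := by linarith
        have hz : ∑ k ∈ Finset.range s, (wf (k:ℤ) - (k:ℤ)) = 0 :=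
          (mul_eq_zero.mp hmul).resolve_left ht'
        rw [Finset.sum_sub_distrib, sum_range_cast] at hz
        linarith
      have hwA : w ∈ AffSymSet s := by
        rw [mem_aff]
        exact ⟨hwper, hwsum⟩
      obtain ⟨hΦw, hPA⟩ := main w hwA
      obtain ⟨hPper, -⟩ := mem_aff.mp hPA
      have hbase : ∀ z : ℤ, PsiFun s t b (⇑w) ((t:ℤ) * z) = x ((t:ℤ) * z) := by
        intro z
        have he := psiFun_eval (s := s) ht b (⇑w) z 0 le_rfl htz
        rw [add_zero] at he
        rw [he]
        have hwz : (⇑w) (z + ee s t b 0) = x ((t:ℤ) * z) / t + ee s t b 0 := by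
          show x ((t:ℤ) * (z + ee s t b 0 - ee s t b 0)) / t + ee s t b 0 = _
          rw [show z + ee s t b 0 - ee s t b 0 = z by ring]
        rw [hwz, add_zero,
          show (t:ℤ) * (x ((t:ℤ)*z)/t + ee s t b 0 - ee s t b 0)
            = (t:ℤ) * (x ((t:ℤ)*z)/t) by ring]
        exact Int.mul_ediv_cancel' (hdvd z)
      have hstep2 : ∀ m : ℤ, PsiFun s t b (⇑w) m = x m →
          PsiFun s t b (⇑w) (m + s) = x (m + s) := by
        intro m hm
        have h1 : PsiFun s t b (⇑w) (m + s) = PsiFun s t b (⇑w) m + s := hPper m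
        rw [h1, hm, hxper]
      have hall : ∀ m : ℤ, PsiFun s t b (⇑w) m = x m := by
        intro m
        obtain ⟨j, hj⟩ : ∃ j : ℕ, (t:ℤ) ∣ (m - (s:ℤ) * j) := by
          refine ⟨((a * m) % (t:ℤ)).toNat, ?_⟩
          have hnn : 0 ≤ (a * m) % (t:ℤ) := Int.emod_nonneg _ ht'
          have hcast : (((a * m % (t:ℤ)).toNat : ℤ)) = a * m % t := Int.toNat_of_nonneg hnn
          rw [hcast]
          have h1 : (t:ℤ) ∣ (m - (s:ℤ) * (a * m)) := by
            have h2 := hv.mul_right m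
            have h3 := dvd_neg.mpr h2
            rwa [show -(((s:ℤ) * a - 1) * m) = m - (s:ℤ) * (a * m) by ring] at h3
          have h2 : (t:ℤ) ∣ ((s:ℤ) * (a * m) - (s:ℤ) * (a * m % t)) := by
            have hh := Int.mul_ediv_add_emod (a * m) t
            exact ⟨(s:ℤ) * (a * m / t), by linear_combination (-(s:ℤ)) * hh⟩
          have h3 := dvd_add h1 h2
          rwa [show m - (s:ℤ)*(a*m) + ((s:ℤ)*(a*m) - (s:ℤ)*(a*m % t))
            = m - (s:ℤ)*(a*m % t) by ring] at h3
        obtain ⟨z, hz⟩ := hj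
        have hQ : ∀ i : ℕ, PsiFun s t b (⇑w) ((m - (s:ℤ)*j) + (s:ℤ)*(i:ℤ))
            = x ((m - (s:ℤ)*j) + (s:ℤ)*(i:ℤ)) := by
          intro i
          induction i with
          | zero =>
              rw [show (m - (s:ℤ)*j) + (s:ℤ)*((0:ℕ):ℤ) = (t:ℤ)*z by push_cast; linarith]
              exact hbase z
          | succ i ihi =>
              rw [show (m - (s:ℤ)*j) + (s:ℤ)*((i+1:ℕ):ℤ)
                = ((m - (s:ℤ)*j) + (s:ℤ)*(i:ℤ)) + s by push_cast; ring]
              exact hstep2 _ ihi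
        have hfin := hQ j
        rwa [show (m - (s:ℤ)*j) + (s:ℤ)*(j:ℤ) = m by ring] at hfin
      have hPx : PsiPerm s t ht b w = x := Equiv.ext fun m => hall m
      exact ⟨w, hwA, by rw [hΦw, hPx]⟩
end
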